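/- arXiv:1908.11669 — 7 statements merged into one kernel-verified Lean document; each statement's English description precedes it below -/
import Mathlib

section
/- Let c be a normalized N-fermion coefficient vector. Then the set of d×d complex matrices of the form B(Ac, c) + B(c, Ac), where A ranges over all skew-adjoint (A† = −A) linear endomorphisms of the space of coefficient vectors (i.e., the image of the derivative of the map c ↦ ρ₁(c) along unitary directions), equals the set of all Hermitian d×d complex matrices X such that trace(h·X) = 0 for every Hermitian d×d matrix h for which there exists a real number λ with ĥ c = λ c. -/
open scoped BigOperators

noncomputable section

/-- An `N`-element configuration: an `N`-element subset of `Fin d`. -/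
abbrev Config (N d : ℕ) := {s : Finset (Fin d) // s.card = N}

/-- An `N`-fermion coefficient vector. -/
abbrev CoeffVec (N d : ℕ) : Type := Config N d → ℂ

/-- Inner product on coefficient vectors, conjugate-linear in the first argument. -/
def cinner {N d : ℕ} (x y : CoeffVec N d) : ℂ := ∑ s : Config N d, star (x s) * y s

/-- Normalization of a coefficient vector. -/
def Normalized {N d : ℕ} (c : CoeffVec N d) : Prop := ∑ s : Config N d, ‖c s‖ ^ 2 = 1

/-- The occupation vector of a configuration `s`. -/
def occVec {N d : ℕ} (s : Config N d) : Fin d → ℝ := fun j => if j ∈ s.val then 1 else 0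

/-- Occupation numbers `n_j(c) = ∑_{s : j ∈ s} |c_s|²`. -/
def occ {N d : ℕ} (c : CoeffVec N d) (j : Fin d) : ℝ :=
  ∑ s : Config N d, if j ∈ s.val then ‖c s‖ ^ 2 else 0

/-- Embedding of a coefficient vector into the full Fock space of `Fin d`. -/
def embed {N d : ℕ} (c : CoeffVec N d) : Finset (Fin d) → ℂ :=
  fun s => if h : s.card = N then c ⟨s, h⟩ else 0

/-- The annihilation operator `f_k` on Fock-space coefficient functions. -/
def annih {d : ℕ} (k : Fin d) (x : Finset (Fin d) → ℂ) : Finset (Fin d) → ℂ :=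
  fun t => if k ∈ t then 0
    else (-1 : ℂ) ^ (t.filter (fun m => m < k)).card * x (insert k t)

/-- The creation operator `f_j†` on Fock-space coefficient functions. -/
def create {d : ℕ} (j : Fin d) (x : Finset (Fin d) → ℂ) : Finset (Fin d) → ℂ :=
  fun s => if j ∈ s
    then (-1 : ℂ) ^ (((s.erase j).filter (fun m => m < j)).card) * x (s.erase j)
    else 0

/-- The matrix-valued sesquilinear form `B(x,y)_{jk} = ⟨x, f_k† f_j y⟩`. -/
def Bform {N d : ℕ} (x y : CoeffVec N d) : Matrix (Fin d) (Fin d) ℂ :=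
  Matrix.of fun j k => ∑ s : Finset (Fin d), star (embed x s) * create k (annih j (embed y)) s

/-- The one-particle reduced density matrix `ρ₁(c)_{jk} = ⟨c, f_k† f_j c⟩`. -/
def rho1 {N d : ℕ} (c : CoeffVec N d) : Matrix (Fin d) (Fin d) ℂ := Bform c c

/-- The induced one-body operator `ĥ = ∑_{j,l} h_{jl} f_j† f_l` on Fock space. -/
def oneBody {d : ℕ} (h : Matrix (Fin d) (Fin d) ℂ) (x : Finset (Fin d) → ℂ) :
    Finset (Fin d) → ℂ :=
  fun s => ∑ j : Fin d, ∑ l : Fin d, h j l * create j (annih l x) s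

/-- The induced one-body operator `ĥ` acting on `N`-fermion coefficient vectors. -/
def oneBodyC {N d : ℕ} (h : Matrix (Fin d) (Fin d) ℂ) (c : CoeffVec N d) : CoeffVec N d :=
  fun s => oneBody h (embed c) s.val

/-- Action of a `d×d` matrix `u` on coefficient vectors by the `N`-th compound matrix
(i.e. the action of `u ∧ … ∧ u` on the Slater-determinant basis). -/
def compAct {N d : ℕ} (u : Matrix (Fin d) (Fin d) ℂ) (c : CoeffVec N d) : CoeffVec N d :=
  fun s => ∑ t : Config N d,
    (Matrix.of fun a b : Fin N =>
      u (↑(s.val.orderIsoOfFin s.2 a)) (↑(t.val.orderIsoOfFin t.2 b))).det * c t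

variable {N d : ℕ}

/-- Fock-space inner product. -/
def finner {d : ℕ} (x y : Finset (Fin d) → ℂ) : ℂ := ∑ s : Finset (Fin d), star (x s) * y s

lemma finner_conj (x y : Finset (Fin d) → ℂ) : star (finner x y) = finner y x := by
  simp [finner, mul_comm]

lemma cinner_conj (x y : CoeffVec N d) : star (cinner x y) = cinner y x := by
  simp [cinner, mul_comm]

lemma embed_eq_zero {x : CoeffVec N d} {s : Finset (Fin d)} (h : ¬ s.card = N) :
    embed x s = 0 := dif_neg h

lemma cinner_eq_finner (x y : CoeffVec N d) : cinner x y = finner (embed x) (embed y) := by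
  classical
  have h1 : (∑ s ∈ Finset.univ.filter (fun s : Finset (Fin d) => s.card = N),
      star (embed x s) * embed y s) = finner (embed x) (embed y) := by
    refine Finset.sum_filter_of_ne ?_
    intro s _ hne
    by_contra hcard
    exact hne (by rw [embed_eq_zero hcard, star_zero, zero_mul])
  have h2 : (∑ s ∈ Finset.univ.filter (fun s : Finset (Fin d) => s.card = N),
      star (embed x s) * embed y s)
      = ∑ t : Config N d, star (embed x t.1) * embed y t.1 :=
    Finset.sum_subtype _ (by simp) _
  rw [← h1, h2, cinner]
  exact Finset.sum_congr rfl fun t _ => by simp [embed, t.2]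

/-- key adjoint relation -/
lemma finner_annih (k : Fin d) (x y : Finset (Fin d) → ℂ) :
    finner (annih k x) y = finner x (create k y) := by
  classical
  unfold finner annih create
  rw [show (∑ t : Finset (Fin d), star (if k ∈ t then 0
      else (-1 : ℂ) ^ (t.filter (fun m => m < k)).card * x (insert k t)) * y t)
    = ∑ t : Finset (Fin d), (if k ∈ t then 0 else
      (-1 : ℂ) ^ (t.filter (fun m => m < k)).card * (star (x (insert k t)) * y t)) from
    Finset.sum_congr rfl fun t _ => by split <;> simp <;> ring]
  rw [show (∑ s : Finset (Fin d), star (x s) * (if k ∈ s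
      then (-1 : ℂ) ^ (((s.erase k).filter (fun m => m < k)).card) * y (s.erase k) else 0))
    = ∑ s : Finset (Fin d), (if k ∈ s then
      (-1 : ℂ) ^ (((s.erase k).filter (fun m => m < k)).card) * (star (x s) * y (s.erase k))
      else 0) from
    Finset.sum_congr rfl fun s _ => by split <;> simp <;> ring]
  rw [Finset.sum_ite, Finset.sum_ite]
  simp only [Finset.sum_const_zero, zero_add, add_zero]
  refine Finset.sum_nbij' (fun t => insert k t) (fun s => s.erase k) ?_ ?_ ?_ ?_ ?_
  · intro a ha; simp_all
  · intro a ha; simp_all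
  · intro a ha; simp only [Finset.mem_filter] at ha; exact Finset.erase_insert ha.2
  · intro a ha; simp only [Finset.mem_filter] at ha; exact Finset.insert_erase ha.2
  · intro a ha
    simp only [Finset.mem_filter] at ha
    rw [Finset.erase_insert ha.2]

lemma finner_create (j : Fin d) (x y : Finset (Fin d) → ℂ) :
    finner (create j x) y = finner x (annih j y) := by
  rw [← finner_conj, ← finner_annih, finner_conj]

lemma Bform_apply (x y : CoeffVec N d) (j k : Fin d) :
    Bform x y j k = finner (annih k (embed x)) (annih j (embed y)) := by
  rw [finner_annih]
  rfl

lemma Bform_conj (x y : CoeffVec N d) (j k : Fin d) :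
    star (Bform x y j k) = Bform y x k j := by
  rw [Bform_apply, Bform_apply, finner_conj]

/-- `f_j† f_l` vanishes on sectors of wrong particle number. -/
lemma create_annih_embed_eq_zero (j l : Fin d) (x : CoeffVec N d) {s : Finset (Fin d)}
    (hs : ¬ s.card = N) : create j (annih l (embed x)) s = 0 := by
  classical
  unfold create annih
  split
  case isTrue hj =>
    split
    case isTrue => simp
    case isFalse hl =>
      rw [embed_eq_zero, mul_zero, mul_zero]
      rw [Finset.card_insert_of_notMem hl, Finset.card_erase_of_mem hj]
      intro hcard
      apply hs
      have h1 : 1 ≤ s.card := Finset.card_pos.mpr ⟨j, hj⟩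
      omega
  case isFalse => rfl

lemma embed_oneBodyC (h : Matrix (Fin d) (Fin d) ℂ) (x : CoeffVec N d) :
    embed (oneBodyC h x) = oneBody h (embed x) := by
  classical
  funext s
  unfold embed oneBodyC
  split
  case isTrue hcard => rfl
  case isFalse hcard =>
    symm
    refine Finset.sum_eq_zero fun j _ => Finset.sum_eq_zero fun l _ => ?_
    exact mul_eq_zero_of_right _ (create_annih_embed_eq_zero j l x hcard)

/-- Trace formula: `tr(h ⬝ B(x,y)) = ⟨x, ĥ y⟩`. -/
lemma trace_mul_Bform (h : Matrix (Fin d) (Fin d) ℂ) (x y : CoeffVec N d) :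
    (h * Bform x y).trace = cinner x (oneBodyC h y) := by
  classical
  rw [cinner_eq_finner, embed_oneBodyC]
  simp only [finner, oneBody, Matrix.trace, Matrix.diag_apply, Matrix.mul_apply, Bform,
    Matrix.of_apply, Finset.mul_sum]
  have swap : ∀ F : Fin d → Fin d → Finset (Fin d) → ℂ,
      (∑ i : Fin d, ∑ j : Fin d, ∑ s : Finset (Fin d), F i j s)
      = ∑ s : Finset (Fin d), ∑ i : Fin d, ∑ j : Fin d, F i j s := by
    intro F
    have h1 : ∀ i : Fin d, (∑ j : Fin d, ∑ s : Finset (Fin d), F i j s)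
        = ∑ s : Finset (Fin d), ∑ j : Fin d, F i j s := fun i => Finset.sum_comm
    simp only [h1]
    exact Finset.sum_comm
  rw [swap]
  refine Finset.sum_congr rfl fun s _ => ?_
  refine Finset.sum_congr rfl fun i _ => ?_
  exact Finset.sum_congr rfl fun j _ => by ring

lemma sum_swap₃ (F : Fin d → Fin d → Finset (Fin d) → ℂ) :
    (∑ i : Fin d, ∑ j : Fin d, ∑ s : Finset (Fin d), F i j s)
    = ∑ s : Finset (Fin d), ∑ i : Fin d, ∑ j : Fin d, F i j s := by
  have h1 : ∀ i : Fin d, (∑ j : Fin d, ∑ s : Finset (Fin d), F i j s)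
      = ∑ s : Finset (Fin d), ∑ j : Fin d, F i j s := fun i => Finset.sum_comm
  simp only [h1]
  exact Finset.sum_comm

lemma cinner_oneBodyC (h : Matrix (Fin d) (Fin d) ℂ) (x y : CoeffVec N d) :
    cinner x (oneBodyC h y)
      = ∑ j : Fin d, ∑ l : Fin d,
          h j l * finner (annih j (embed x)) (annih l (embed y)) := by
  classical
  rw [cinner_eq_finner, embed_oneBodyC]
  have key : ∀ j l : Fin d, finner (annih j (embed x)) (annih l (embed y))
      = finner (embed x) (create j (annih l (embed y))) := fun j l => finner_annih _ _ _
  simp only [key]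
  simp only [finner, oneBody, Finset.mul_sum]
  rw [sum_swap₃]
  refine Finset.sum_congr rfl fun s _ => Finset.sum_congr rfl fun j _ =>
    Finset.sum_congr rfl fun l _ => by ring

lemma oneBodyC_selfAdjoint {h : Matrix (Fin d) (Fin d) ℂ} (hh : h.IsHermitian)
    (x y : CoeffVec N d) : cinner (oneBodyC h x) y = cinner x (oneBodyC h y) := by
  rw [← cinner_conj y (oneBodyC h x), cinner_oneBodyC, cinner_oneBodyC]
  rw [star_sum]
  rw [Finset.sum_comm]
  refine Finset.sum_congr rfl fun j _ => ?_
  rw [star_sum]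
  refine Finset.sum_congr rfl fun l _ => ?_
  rw [star_mul', finner_conj, hh.apply]

lemma cinner_add_right (x y z : CoeffVec N d) :
    cinner x (y + z) = cinner x y + cinner x z := by
  simp [cinner, mul_add, Finset.sum_add_distrib]

lemma cinner_sub_right (x y z : CoeffVec N d) :
    cinner x (y - z) = cinner x y - cinner x z := by
  simp [cinner, mul_sub, Finset.sum_sub_distrib]

lemma cinner_smul_right (a : ℂ) (x y : CoeffVec N d) :
    cinner x (a • y) = a * cinner x y := by
  simp only [cinner, Pi.smul_apply, smul_eq_mul, Finset.mul_sum]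
  exact Finset.sum_congr rfl fun s _ => by ring

lemma cinner_add_left (x y z : CoeffVec N d) :
    cinner (x + y) z = cinner x z + cinner y z := by
  simp [cinner, add_mul, Finset.sum_add_distrib]

lemma cinner_sub_left (x y z : CoeffVec N d) :
    cinner (x - y) z = cinner x z - cinner y z := by
  simp [cinner, sub_mul, Finset.sum_sub_distrib]

lemma cinner_smul_left (a : ℂ) (x y : CoeffVec N d) :
    cinner (a • x) y = star a * cinner x y := by
  simp only [cinner, Pi.smul_apply, smul_eq_mul, star_mul', Finset.mul_sum]
  exact Finset.sum_congr rfl fun s _ => by ring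

lemma cinner_self_normalized {c : CoeffVec N d} (hc : Normalized c) : cinner c c = 1 := by
  unfold cinner
  have : ∀ s : Config N d, star (c s) * c s = ((‖c s‖ ^ 2 : ℝ) : ℂ) := by
    intro s
    rw [Complex.star_def, ← Complex.normSq_eq_conj_mul_self, Complex.normSq_eq_norm_sq]
  simp only [this]
  rw [← Complex.ofReal_sum, hc, Complex.ofReal_one]

lemma eq_zero_of_cinner_self {x : CoeffVec N d} (h : cinner x x = 0) : x = 0 := by
  unfold cinner at h
  have h2 : ∀ s : Config N d, star (x s) * x s = ((Complex.normSq (x s) : ℝ) : ℂ) := by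
    intro s
    rw [Complex.star_def, ← Complex.normSq_eq_conj_mul_self]
  rw [Finset.sum_congr rfl (fun s _ => h2 s), ← Complex.ofReal_sum] at h
  have h3 : (∑ s : Config N d, Complex.normSq (x s)) = 0 := by exact_mod_cast h
  funext s
  have := (Finset.sum_eq_zero_iff_of_nonneg
    (fun s _ => Complex.normSq_nonneg (x s))).mp h3 s (Finset.mem_univ s)
  exact Complex.normSq_eq_zero.mp this

lemma embed_add (x y : CoeffVec N d) : embed (x + y) = embed x + embed y := by
  funext s; by_cases hs : s.card = N <;> simp [embed, hs]

lemma annih_add (k : Fin d) (u v : Finset (Fin d) → ℂ) :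
    annih k (u + v) = annih k u + annih k v := by
  funext t; by_cases hk : k ∈ t <;> simp [annih, hk, mul_add]

lemma finner_add_left (x y z : Finset (Fin d) → ℂ) :
    finner (x + y) z = finner x z + finner y z := by
  simp [finner, add_mul, Finset.sum_add_distrib]

lemma finner_add_right (x y z : Finset (Fin d) → ℂ) :
    finner x (y + z) = finner x y + finner x z := by
  simp [finner, mul_add, Finset.sum_add_distrib]

lemma embed_smul (a : ℂ) (x : CoeffVec N d) : embed (a • x) = a • embed x := by
  funext s; by_cases hs : s.card = N <;> simp [embed, hs]

lemma annih_smul (k : Fin d) (a : ℂ) (u : Finset (Fin d) → ℂ) :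
    annih k (a • u) = a • annih k u := by
  funext t
  by_cases hk : k ∈ t
  · simp [annih, hk]
  · simp only [annih, hk, if_false, Pi.smul_apply, smul_eq_mul]; ring

lemma finner_smul_left (a : ℂ) (x y : Finset (Fin d) → ℂ) :
    finner (a • x) y = star a * finner x y := by
  simp only [finner, Pi.smul_apply, smul_eq_mul, star_mul', Finset.mul_sum]
  exact Finset.sum_congr rfl fun s _ => by ring

lemma finner_smul_right (a : ℂ) (x y : Finset (Fin d) → ℂ) :
    finner x (a • y) = a * finner x y := by
  simp only [finner, Pi.smul_apply, smul_eq_mul, Finset.mul_sum]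
  exact Finset.sum_congr rfl fun s _ => by ring

lemma Bform_add_left (x x' y : CoeffVec N d) :
    Bform (x + x') y = Bform x y + Bform x' y := by
  ext j k
  simp [Bform_apply, embed_add, annih_add, finner_add_left]

lemma Bform_add_right (x y y' : CoeffVec N d) :
    Bform x (y + y') = Bform x y + Bform x y' := by
  ext j k
  simp [Bform_apply, embed_add, annih_add, finner_add_right]

lemma Bform_smul_left (a : ℂ) (x y : CoeffVec N d) :
    Bform (a • x) y = star a • Bform x y := by
  ext j k
  simp [Bform_apply, embed_smul, annih_smul, finner_smul_left]

lemma Bform_smul_right (a : ℂ) (x y : CoeffVec N d) :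
    Bform x (a • y) = a • Bform x y := by
  ext j k
  simp [Bform_apply, embed_smul, annih_smul, finner_smul_right]

lemma Bform_pair_isHermitian (u v : CoeffVec N d) :
    (Bform u v + Bform v u).IsHermitian := by
  unfold Matrix.IsHermitian
  ext j k
  simp only [Matrix.conjTranspose_apply, Matrix.add_apply, star_add, Bform_conj]
  ring

lemma trace_eigen_zero {h : Matrix (Fin d) (Fin d) ℂ} (hh : h.IsHermitian)
    {c : CoeffVec N d} {lam : ℝ} (heig : oneBodyC h c = (lam : ℂ) • c)
    (A : CoeffVec N d →ₗ[ℂ] CoeffVec N d)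
    (hA : ∀ x y : CoeffVec N d, cinner (A x) y = - cinner x (A y)) :
    (h * (Bform (A c) c + Bform c (A c))).trace = 0 := by
  rw [Matrix.mul_add, Matrix.trace_add, trace_mul_Bform, trace_mul_Bform, heig,
    ← oneBodyC_selfAdjoint hh c (A c), heig, cinner_smul_right, cinner_smul_left,
    hA c c]
  rw [Complex.star_def, Complex.conj_ofReal]
  ring

lemma embed_zero : embed (0 : CoeffVec N d) = 0 := by
  funext s; simp [embed]

lemma annih_zero (k : Fin d) : annih k (0 : Finset (Fin d) → ℂ) = 0 := by
  funext t; simp [annih]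

lemma Bform_zero_left (y : CoeffVec N d) : Bform (0 : CoeffVec N d) y = 0 := by
  ext j k
  simp [Bform_apply, embed_zero, annih_zero, finner]

lemma Bform_zero_right (x : CoeffVec N d) : Bform x (0 : CoeffVec N d) = 0 := by
  ext j k
  simp [Bform_apply, embed_zero, annih_zero, finner]

lemma real_smul_matrix (r : ℝ) (M : Matrix (Fin d) (Fin d) ℂ) :
    r • M = ((r : ℂ)) • M := by
  ext i j
  simp [Complex.real_smul]

/-- The image of the derivative, as a real submodule of matrices. -/
def skewSet {N d : ℕ} (c : CoeffVec N d) : Submodule ℝ (Matrix (Fin d) (Fin d) ℂ) where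
  carrier := { X : Matrix (Fin d) (Fin d) ℂ |
    ∃ A : CoeffVec N d →ₗ[ℂ] CoeffVec N d,
      (∀ x y : CoeffVec N d, cinner (A x) y = - cinner x (A y)) ∧
      X = Bform (A c) c + Bform c (A c) }
  add_mem' := by
    rintro X Y ⟨A, hA, rfl⟩ ⟨B, hB, rfl⟩
    refine ⟨A + B, fun x y => ?_, ?_⟩
    · simp only [LinearMap.add_apply, cinner_add_left, cinner_add_right, hA x y, hB x y]
      ring
    · simp only [LinearMap.add_apply, Bform_add_left, Bform_add_right]
      abel
  zero_mem' := by
    refine ⟨0, fun x y => ?_, ?_⟩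
    · have h0 : cinner (0 : CoeffVec N d) y = 0 := by simp [cinner]
      have h0' : cinner x (0 : CoeffVec N d) = 0 := by simp [cinner]
      simp [LinearMap.zero_apply, h0, h0']
    · simp [LinearMap.zero_apply, Bform_zero_left, Bform_zero_right]
  smul_mem' := by
    rintro r X ⟨A, hA, rfl⟩
    refine ⟨(r : ℂ) • A, fun x y => ?_, ?_⟩
    · simp only [LinearMap.smul_apply, cinner_smul_left, cinner_smul_right, hA x y,
        Complex.star_def, Complex.conj_ofReal]
      ring
    · simp only [LinearMap.smul_apply, Bform_smul_left, Bform_smul_right,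
        Complex.star_def, Complex.conj_ofReal, real_smul_matrix, smul_add]

lemma mem_skewSet {c : CoeffVec N d} {X : Matrix (Fin d) (Fin d) ℂ} :
    X ∈ skewSet c ↔
      ∃ A : CoeffVec N d →ₗ[ℂ] CoeffVec N d,
        (∀ x y : CoeffVec N d, cinner (A x) y = - cinner x (A y)) ∧
        X = Bform (A c) c + Bform c (A c) := Iff.rfl

open scoped Matrix in
lemma trace_re_eq (G Y : Matrix (Fin d) (Fin d) ℂ) :
    ((Gᴴ * Y).trace).re
      = ∑ j : Fin d, ∑ k : Fin d,
          ((G j k).re * (Y j k).re + (G j k).im * (Y j k).im) := by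
  simp only [Matrix.trace, Matrix.diag_apply, Matrix.mul_apply, Matrix.conjTranspose_apply,
    Complex.re_sum, Complex.mul_re, Complex.star_def, Complex.conj_re, Complex.conj_im]
  rw [Finset.sum_comm]
  exact Finset.sum_congr rfl fun j _ => Finset.sum_congr rfl fun k _ => by ring

open scoped Matrix in
/-- Every real-linear functional on complex matrices is `Y ↦ Re tr(Gᴴ Y)`. -/
lemma dual_rep (φ : Module.Dual ℝ (Matrix (Fin d) (Fin d) ℂ)) :
    ∃ G : Matrix (Fin d) (Fin d) ℂ, ∀ Y : Matrix (Fin d) (Fin d) ℂ,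
      φ Y = ((Gᴴ * Y).trace).re := by
  classical
  refine ⟨Matrix.of fun j k => ((φ (Matrix.single j k 1) : ℝ) : ℂ)
    + ((φ (Matrix.single j k Complex.I) : ℝ) : ℂ) * Complex.I, fun Y => ?_⟩
  have hdec : Y = ∑ j : Fin d, ∑ k : Fin d,
      ((Y j k).re • Matrix.single j k (1 : ℂ)
        + (Y j k).im • Matrix.single j k Complex.I) := by
    ext a b
    simp only [Matrix.sum_apply, Matrix.add_apply, Matrix.smul_apply,
      Matrix.single, Matrix.of_apply]
    rw [Finset.sum_eq_single a, Finset.sum_eq_single b]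
    · simp [Complex.real_smul]
    · intro k _ hk; simp [hk]
    · simp
    · intro j _ hj
      rw [Finset.sum_eq_zero]
      intro k _
      simp [hj]
    · simp
  conv_lhs => rw [hdec]
  simp only [map_sum, map_add, map_smul, smul_eq_mul]
  rw [trace_re_eq]
  refine Finset.sum_congr rfl fun j _ => Finset.sum_congr rfl fun k _ => ?_
  simp only [Matrix.of_apply, Complex.add_re, Complex.add_im, Complex.ofReal_re,
    Complex.ofReal_im, Complex.mul_re, Complex.mul_im, Complex.I_re, Complex.I_im]
  ring

open scoped Matrix in
lemma hermPart_isHermitian (G : Matrix (Fin d) (Fin d) ℂ) :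
    ((2⁻¹ : ℂ) • (G + Gᴴ)).IsHermitian := by
  unfold Matrix.IsHermitian
  rw [Matrix.conjTranspose_smul, Matrix.conjTranspose_add, Matrix.conjTranspose_conjTranspose]
  rw [show star (2⁻¹ : ℂ) = 2⁻¹ by simp, add_comm]

open scoped Matrix in
lemma trace_hermPart (G Y : Matrix (Fin d) (Fin d) ℂ) (hY : Y.IsHermitian) :
    ((((2⁻¹ : ℂ) • (G + Gᴴ)) * Y)).trace = (((Gᴴ * Y).trace).re : ℂ) := by
  have key : (G * Y).trace = star ((Gᴴ * Y).trace) := by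
    rw [← Matrix.trace_conjTranspose, Matrix.conjTranspose_mul,
      Matrix.conjTranspose_conjTranspose, hY.eq, Matrix.trace_mul_comm]
  rw [Matrix.smul_mul, Matrix.trace_smul, Matrix.add_mul, Matrix.trace_add, key]
  have h2 : star ((Gᴴ * Y).trace) + ((Gᴴ * Y).trace)
      = ((2 * ((Gᴴ * Y).trace).re : ℝ) : ℂ) := by
    rw [show (star ((Gᴴ * Y).trace)) = (starRingEnd ℂ) ((Gᴴ * Y).trace) from rfl, add_comm,
      Complex.add_conj]
  rw [h2, smul_eq_mul]
  push_cast
  ring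

/-- rank-one map `x ↦ ⟨p, x⟩ q`. -/
def rankMap (p q : CoeffVec N d) : CoeffVec N d →ₗ[ℂ] CoeffVec N d where
  toFun := fun x => cinner p x • q
  map_add' := fun x y => by
    show cinner p (x + y) • q = cinner p x • q + cinner p y • q
    rw [cinner_add_right, add_smul]
  map_smul' := fun a x => by
    show cinner p (a • x) • q = (RingHom.id ℂ) a • (cinner p x • q)
    rw [cinner_smul_right, RingHom.id_apply, smul_smul]

@[simp] lemma rankMap_apply (p q x : CoeffVec N d) :
    rankMap p q x = cinner p x • q := rfl

lemma eigen_of_orth {c : CoeffVec N d} (hc : Normalized c)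
    {h : Matrix (Fin d) (Fin d) ℂ} (hh : h.IsHermitian)
    (horth : ∀ A : CoeffVec N d →ₗ[ℂ] CoeffVec N d,
      (∀ x y : CoeffVec N d, cinner (A x) y = - cinner x (A y)) →
      cinner (A c) (oneBodyC h c) + cinner c (oneBodyC h (A c)) = 0) :
    ∃ lam : ℝ, oneBodyC h c = (lam : ℂ) • c := by
  set u : CoeffVec N d := oneBodyC h c with hu
  set μ : ℂ := cinner c u with hμ
  have hμreal : star μ = μ := by
    rw [hμ, cinner_conj, hu, oneBodyC_selfAdjoint hh c c]
  have cond : ∀ A : CoeffVec N d →ₗ[ℂ] CoeffVec N d,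
      (∀ x y : CoeffVec N d, cinner (A x) y = - cinner x (A y)) →
      cinner (A c) u + star (cinner (A c) u) = 0 := by
    intro A hA
    have h1 := horth A hA
    rwa [← oneBodyC_selfAdjoint hh c (A c), ← hu, ← cinner_conj (A c) u] at h1
  have key : ∀ w : CoeffVec N d, cinner w u = μ * cinner w c := by
    intro w
    set A₁ : CoeffVec N d →ₗ[ℂ] CoeffVec N d := rankMap c w - rankMap w c with hA₁
    set A₂ : CoeffVec N d →ₗ[ℂ] CoeffVec N d :=
      Complex.I • (rankMap c w + rankMap w c) with hA₂
    have hA₁skew : ∀ x y : CoeffVec N d, cinner (A₁ x) y = - cinner x (A₁ y) := by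
      intro x y
      simp only [hA₁, LinearMap.sub_apply, rankMap_apply, cinner_sub_left, cinner_sub_right,
        cinner_smul_left, cinner_smul_right, cinner_conj]
      ring
    have hA₂skew : ∀ x y : CoeffVec N d, cinner (A₂ x) y = - cinner x (A₂ y) := by
      intro x y
      simp only [hA₂, LinearMap.smul_apply, LinearMap.add_apply, rankMap_apply,
        cinner_add_left, cinner_add_right, cinner_smul_left, cinner_smul_right, cinner_conj,
        Complex.star_def, Complex.conj_I, map_neg, smul_add]
      ring
    have hcc : cinner c c = 1 := cinner_self_normalized hc
    have hA₁c : A₁ c = w - cinner w c • c := by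
      simp [hA₁, hcc]
    have hA₂c : A₂ c = Complex.I • (w + cinner w c • c) := by
      simp [hA₂, hcc]
    set a : ℂ := cinner w u with ha
    set b : ℂ := star (cinner w c) * μ with hb
    have e1 := cond A₁ hA₁skew
    rw [hA₁c, cinner_sub_left, cinner_smul_left, ← hμ, ← ha, ← hb] at e1
    have e2 := cond A₂ hA₂skew
    rw [hA₂c, cinner_smul_left, cinner_add_left, cinner_smul_left, ← hμ, ← ha, ← hb] at e2
    simp only [star_sub, star_add, star_mul', Complex.star_def, Complex.conj_I,
      map_neg] at e1 e2
    have ha_eq : a = star b := by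
      have e2' : Complex.I * ((starRingEnd ℂ) a + (starRingEnd ℂ) b - (a + b)) = 0 := by
        linear_combination e2
      have e2'' : (starRingEnd ℂ) a + (starRingEnd ℂ) b - (a + b) = 0 := by
        rcases mul_eq_zero.mp e2' with hI | hok
        · exact absurd hI Complex.I_ne_zero
        · exact hok
      rw [show star b = (starRingEnd ℂ) b from rfl]
      linear_combination (e1 - e2'') / 2
    rw [ha_eq, hb, star_mul', star_star, hμreal]
    ring
  have hzero : cinner (u - μ • c) (u - μ • c) = 0 := by
    rw [cinner_sub_right, cinner_smul_right, key (u - μ • c)]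
    ring
  have huc : u - μ • c = 0 := eq_zero_of_cinner_self hzero
  refine ⟨μ.re, ?_⟩
  have hμre : (μ.re : ℂ) = μ := Complex.conj_eq_iff_re.mp hμreal
  rw [hμre, ← sub_eq_zero]
  exact huc

/-- Lemma 1: for a normalized `N`-fermion coefficient vector `c`, the image of the derivative
of `c ↦ ρ₁(c)` along unitary directions, i.e. the set of matrices `B(Ac,c) + B(c,Ac)` with
`A` skew-adjoint, equals the set of Hermitian matrices `X` with `trace(h·X) = 0` for every
Hermitian `h` whose induced one-body operator has `c` as eigenvector with real eigenvalue. -/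
theorem stmt_0 (N d : ℕ) (hN : 1 ≤ N) (hNd : N ≤ d)
    (c : CoeffVec N d) (hc : Normalized c) :
    { X : Matrix (Fin d) (Fin d) ℂ |
        ∃ A : CoeffVec N d →ₗ[ℂ] CoeffVec N d,
          (∀ x y : CoeffVec N d, cinner (A x) y = - cinner x (A y)) ∧
          X = Bform (A c) c + Bform c (A c) } =
    { X : Matrix (Fin d) (Fin d) ℂ |
        X.IsHermitian ∧
        ∀ h : Matrix (Fin d) (Fin d) ℂ, h.IsHermitian →
          (∃ lam : ℝ, oneBodyC h c = (lam : ℂ) • c) →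
          (h * X).trace = 0 } := by
  ext X
  simp only [Set.mem_setOf_eq]
  constructor
  · rintro ⟨A, hA, rfl⟩
    exact ⟨Bform_pair_isHermitian (A c) c,
      fun h hh ⟨lam, heig⟩ => trace_eigen_zero hh heig A hA⟩
  · rintro ⟨hX, htr⟩
    have hmem : X ∈ skewSet c := by
      refine (Subspace.forall_mem_dualAnnihilator_apply_eq_zero_iff (skewSet c) X).mp ?_
      intro φ hφ
      rw [Submodule.mem_dualAnnihilator] at hφ
      obtain ⟨G, hG⟩ := dual_rep φ
      set h : Matrix (Fin d) (Fin d) ℂ := (2⁻¹ : ℂ) • (G + G.conjTranspose) with hhdef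
      have hherm : h.IsHermitian := hermPart_isHermitian G
      have horth : ∀ A : CoeffVec N d →ₗ[ℂ] CoeffVec N d,
          (∀ x y : CoeffVec N d, cinner (A x) y = - cinner x (A y)) →
          cinner (A c) (oneBodyC h c) + cinner c (oneBodyC h (A c)) = 0 := by
        intro A hA
        have hU : Bform (A c) c + Bform c (A c) ∈ skewSet c := ⟨A, hA, rfl⟩
        have h0 : φ (Bform (A c) c + Bform c (A c)) = 0 := hφ _ hU
        have hherm' : (Bform (A c) c + Bform c (A c)).IsHermitian :=
          Bform_pair_isHermitian (A c) c
        have htrh := trace_hermPart G _ hherm'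
        rw [hG] at h0
        rw [h0] at htrh
        rw [Matrix.mul_add, Matrix.trace_add, trace_mul_Bform, trace_mul_Bform] at htrh
        simpa only [Complex.ofReal_zero] using htrh
      obtain ⟨lam, heig⟩ := eigen_of_orth hc hherm horth
      have hx0 : (h * X).trace = 0 := htr h hherm ⟨lam, heig⟩
      have htrX := trace_hermPart G X hX
      rw [hx0] at htrX
      rw [hG X]
      exact_mod_cast htrX.symm
    exact hmem
end
end

section
/- Let κ₀ ∈ ℝ and κ ∈ ℝ^d, and let c be a nonzero N-fermion coefficient vector such that every configuration s in the support of c satisfies κ₀ + Σ_{j∈s} κ_j = 0. Then there exists a unitary d×d matrix u with u_{jl} = 0 whenever κ_j ≠ κ_l, such that: (i) ρ₁(u·c) is diagonal; (ii) every configuration s in the support of u·c satisfies κ₀ + Σ_{j∈s} κ_j = 0; and (iii) ρ₁(u·c)_{jj} ≥ ρ₁(u·c)_{ll} for all indices j < l with κ_j = κ_l. -/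
open scoped BigOperators

noncomputable section

/-
Write `U` for the compound action of `u` on the Fock space of `Fin d`. Laplace expansion of a minor
along its first row gives `f_j U = ∑_l u_{jl} U f_l`, so `⟨f_k U x, f_j U y⟩ = (u M uᴴ)_{jk}` with
`M_{pq} = ⟨U f_q x, U f_p y⟩`. Taking traces and using `∑_j f_j† f_j = n` on `n`-particle vectors,
induction on `n` shows that `U` is an isometry when `u` is unitary; then `M = ρ₁(c)` for
`x = y = c`, that is, `ρ₁(U c) = u ρ₁(c) uᴴ`.
The support condition makes `ρ₁(c)` block diagonal along the level sets of `κ`: a configuration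
`t` with `t ∪ {j}` and `t ∪ {k}` both in the support has `κ_j = κ_k`. Diagonalizing each block by a
unitary, with eigenvalues sorted decreasingly, gives `u`. A minor of such a `u` vanishes unless its
rows and columns have the same `κ`-sum, so `U` preserves the support condition.
-/

open Matrix Finset

lemma Finset.sum_univ_eq_sum_powerset_erase {α M : Type*} [Fintype α] [DecidableEq α]
    [AddCommMonoid M] (a : α) (f : Finset α → M) :
    ∑ s, f s = ∑ t ∈ (univ.erase a).powerset, (f t + f (insert a t)) := by
  rw [sum_add_distrib, ← sum_powerset_insert (notMem_erase a univ), insert_erase (mem_univ a),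
    powerset_univ]

lemma Finset.notMem_of_mem_powerset_erase {α : Type*} [DecidableEq α] {a : α} {s t : Finset α}
    (ht : t ∈ (s.erase a).powerset) : a ∉ t :=
  fun ha => notMem_erase a s (mem_powerset.1 ht ha)

lemma Finset.sum_eq_sum_orderEmbOfFin {α M : Type*} [LinearOrder α] [AddCommMonoid M]
    {s : Finset α} {n : ℕ} (hs : s.card = n) (f : α → M) :
    ∑ x ∈ s, f x = ∑ i, f (s.orderEmbOfFin hs i) := by
  conv_lhs => rw [← map_orderEmbOfFin_univ s hs]
  rw [sum_map]
  rfl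

lemma Finset.orderEmbOfFin_erase {α : Type*} [LinearOrder α] {s : Finset α} {n : ℕ}
    (hs : s.card = n + 1) (i : Fin (n + 1)) (he : (s.erase (s.orderEmbOfFin hs i)).card = n)
    (a : Fin n) :
    (s.erase (s.orderEmbOfFin hs i)).orderEmbOfFin he a = s.orderEmbOfFin hs (i.succAbove a) := by
  refine congrFun (orderEmbOfFin_unique he (fun a => mem_erase.2 ⟨?_, orderEmbOfFin_mem _ _ _⟩)
    ((s.orderEmbOfFin hs).strictMono.comp (Fin.strictMono_succAbove i))) a |>.symm
  exact fun h => Fin.succAbove_ne i a ((s.orderEmbOfFin hs).injective h)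

lemma Finset.card_filter_lt_orderEmbOfFin {α : Type*} [LinearOrder α] {s : Finset α} {n : ℕ}
    (hs : s.card = n) (i : Fin n) :
    (s.filter (· < s.orderEmbOfFin hs i)).card = i := by
  have : s.filter (· < s.orderEmbOfFin hs i) = (Iio i).map (s.orderEmbOfFin hs).toEmbedding := by
    ext m
    simp only [mem_filter, mem_map, mem_Iio, RelEmbedding.coe_toEmbedding]
    constructor
    · rintro ⟨hm, hlt⟩
      obtain ⟨b, rfl⟩ : m ∈ Set.range (s.orderEmbOfFin hs) := by
        rwa [range_orderEmbOfFin]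
      exact ⟨b, (s.orderEmbOfFin hs).lt_iff_lt.1 hlt, rfl⟩
    · rintro ⟨b, hb, rfl⟩
      exact ⟨orderEmbOfFin_mem _ _ _, (s.orderEmbOfFin hs).strictMono hb⟩
  rw [this, card_map, Fin.card_Iio]

lemma Matrix.exists_perm_forall_ne_zero_of_det_ne_zero {n R : Type*} [Fintype n] [DecidableEq n]
    [CommRing R] {M : Matrix n n R} (h : M.det ≠ 0) : ∃ σ : Equiv.Perm n, ∀ i, M (σ i) i ≠ 0 := by
  rw [det_apply'] at h
  obtain ⟨σ, -, hσ⟩ := exists_ne_zero_of_sum_ne_zero h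
  exact ⟨σ, fun i hi => right_ne_zero_of_mul hσ (prod_eq_zero (mem_univ i) hi)⟩

lemma Equiv.Perm.exists_antitone_comp {B α : Type*} [Fintype B] [LinearOrder B] [LinearOrder α]
    (f : B → α) : ∃ σ : Equiv.Perm B, Antitone (f ∘ σ) := by
  let e := monoEquivOfFin B rfl
  let g : Fin (Fintype.card B) → αᵒᵈ := OrderDual.toDual ∘ f ∘ e
  refine ⟨e.symm.toEquiv.trans ((Tuple.sort g).trans e.toEquiv), ?_⟩
  exact monotone_toDual_comp_iff.1 ((Tuple.monotone_sort g).comp e.symm.monotone)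

lemma Matrix.IsHermitian.exists_conj_eq_diagonal_antitone {𝕜 B : Type*} [RCLike 𝕜] [Fintype B]
    [DecidableEq B] [LinearOrder B] {A : Matrix B B 𝕜} (hA : A.IsHermitian) :
    ∃ w : Matrix B B 𝕜, wᴴ * w = 1 ∧ ∃ μ : B → ℝ, Antitone μ ∧
      w * A * wᴴ = diagonal fun a => (μ a : 𝕜) := by
  set U : Matrix B B 𝕜 := (hA.eigenvectorUnitary : Matrix B B 𝕜)
  have hU : star U * U = 1 := Unitary.coe_star_mul_self _
  have hD : star U * A * U = diagonal (RCLike.ofReal ∘ hA.eigenvalues) := by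
    simpa using hA.conjStarAlgAut_star_eigenvectorUnitary
  obtain ⟨σ, hσ⟩ := Equiv.Perm.exists_antitone_comp hA.eigenvalues
  have hmul : ∀ M N : Matrix B B 𝕜, M.submatrix σ id * N.submatrix id σ = (M * N).submatrix σ σ :=
    fun M N => submatrix_mul_equiv M N σ (Equiv.refl B) σ
  have hA' : (star U).submatrix σ id * A = (star U * A).submatrix σ id :=
    submatrix_mul_equiv (star U) A σ (Equiv.refl B) id
  have hw : ((star U).submatrix σ id)ᴴ = U.submatrix id σ := by
    rw [conjTranspose_submatrix, ← star_eq_conjTranspose, star_star]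
  refine ⟨(star U).submatrix σ id, ?_, _, hσ, ?_⟩
  · rw [mul_eq_one_comm, hw, hmul, hU, submatrix_one_equiv]
  · rw [hw, hA', hmul, hD, submatrix_diagonal_equiv]
    rfl

namespace Matrix

variable {ι β α : Type*} [DecidableEq β] {κ : ι → β}

variable (κ) in
def blockDiagonalFibers [Zero α] (A : ∀ v : β, Matrix {i // κ i = v} {i // κ i = v} α) :
    Matrix ι ι α :=
  of fun j l => if h : κ j = κ l then A (κ l) ⟨j, h⟩ ⟨l, rfl⟩ else 0

section Zero

variable [Zero α] (A : ∀ v : β, Matrix {i // κ i = v} {i // κ i = v} α)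

lemma blockDiagonalFibers_apply_of_eq {j l : ι} {v : β} (hj : κ j = v) (hl : κ l = v) :
    blockDiagonalFibers κ A j l = A v ⟨j, hj⟩ ⟨l, hl⟩ := by
  subst hl
  simp [blockDiagonalFibers, hj]

lemma blockDiagonalFibers_apply_of_ne {j l : ι} (h : κ j ≠ κ l) :
    blockDiagonalFibers κ A j l = 0 := by
  simp [blockDiagonalFibers, h]

lemma blockDiagonalFibers_diagonal [DecidableEq ι] (μ : ∀ v : β, {i // κ i = v} → α) :
    blockDiagonalFibers κ (fun v => diagonal (μ v)) = diagonal fun j => μ (κ j) ⟨j, rfl⟩ := by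
  ext j l
  by_cases h : κ j = κ l
  · rw [blockDiagonalFibers_apply_of_eq _ h rfl]
    by_cases hjl : j = l
    · subst hjl; simp
    · rw [diagonal_apply_ne _ (by simpa using hjl), diagonal_apply_ne _ hjl]
  · rw [blockDiagonalFibers_apply_of_ne _ h, diagonal_apply_ne _ (fun hjl => h (congrArg κ hjl))]

lemma blockDiagonalFibers_submatrix {H : Matrix ι ι α} (hH : ∀ j l, κ j ≠ κ l → H j l = 0) :
    blockDiagonalFibers κ (fun _ => H.submatrix Subtype.val Subtype.val) = H := by
  ext j l
  by_cases h : κ j = κ l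
  · rw [blockDiagonalFibers_apply_of_eq _ h rfl, submatrix_apply]
  · rw [blockDiagonalFibers_apply_of_ne _ h, hH j l h]

end Zero

lemma blockDiagonalFibers_one [DecidableEq ι] [Zero α] [One α] :
    blockDiagonalFibers κ (fun _ => (1 : Matrix _ _ α)) = 1 := by
  simp_rw [← diagonal_one, blockDiagonalFibers_diagonal]

lemma blockDiagonalFibers_mul [Fintype ι] [NonUnitalNonAssocSemiring α]
    (A B : ∀ v : β, Matrix {i // κ i = v} {i // κ i = v} α) :
    blockDiagonalFibers κ A * blockDiagonalFibers κ B
      = blockDiagonalFibers κ fun v => A v * B v := by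
  ext j l
  by_cases h : κ j = κ l
  · have h0 : ∑ m : {m // ¬κ m = κ l},
        blockDiagonalFibers κ A j m * blockDiagonalFibers κ B m l = 0 :=
      sum_eq_zero fun m _ => by rw [blockDiagonalFibers_apply_of_ne B m.2, mul_zero]
    rw [blockDiagonalFibers_apply_of_eq _ h rfl, mul_apply, mul_apply,
      ← Fintype.sum_subtype_add_sum_subtype (κ · = κ l), h0, add_zero]
    exact sum_congr rfl fun m _ => by
      rw [blockDiagonalFibers_apply_of_eq A h m.2, blockDiagonalFibers_apply_of_eq B m.2 rfl]
  · rw [blockDiagonalFibers_apply_of_ne _ h, mul_apply]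
    refine sum_eq_zero fun m _ => ?_
    by_cases hm : κ j = κ m
    · rw [blockDiagonalFibers_apply_of_ne B (hm ▸ h), mul_zero]
    · rw [blockDiagonalFibers_apply_of_ne A hm, zero_mul]

lemma conjTranspose_blockDiagonalFibers [AddMonoid α] [StarAddMonoid α]
    (A : ∀ v : β, Matrix {i // κ i = v} {i // κ i = v} α) :
    (blockDiagonalFibers κ A)ᴴ = blockDiagonalFibers κ fun v => (A v)ᴴ := by
  ext j l
  by_cases h : κ j = κ l
  · rw [conjTranspose_apply, blockDiagonalFibers_apply_of_eq _ h rfl,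
      blockDiagonalFibers_apply_of_eq _ rfl h, conjTranspose_apply]
  · rw [conjTranspose_apply, blockDiagonalFibers_apply_of_ne _ h,
      blockDiagonalFibers_apply_of_ne _ (Ne.symm h), star_zero]

end Matrix

lemma Matrix.IsHermitian.exists_blockDiagonal_conj_eq_diagonal {ι β 𝕜 : Type*} [Fintype ι]
    [DecidableEq ι] [LinearOrder ι] [DecidableEq β] [RCLike 𝕜] (κ : ι → β) {H : Matrix ι ι 𝕜}
    (hH : H.IsHermitian) (hblk : ∀ j l, κ j ≠ κ l → H j l = 0) :
    ∃ u : Matrix ι ι 𝕜, uᴴ * u = 1 ∧ (∀ j l, κ j ≠ κ l → u j l = 0) ∧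
      ∃ μ : ι → ℝ, (∀ j l, j < l → κ j = κ l → μ l ≤ μ j) ∧
        u * H * uᴴ = diagonal fun j => (μ j : 𝕜) := by
  choose w hw μ hμ hconj using fun v =>
    (hH.submatrix (Subtype.val : {i // κ i = v} → ι)).exists_conj_eq_diagonal_antitone
  refine ⟨blockDiagonalFibers κ w, ?_, fun j l h => blockDiagonalFibers_apply_of_ne w h,
    fun j => μ (κ j) ⟨j, rfl⟩, fun j l hjl hκ => ?_, ?_⟩
  · rw [conjTranspose_blockDiagonalFibers, blockDiagonalFibers_mul]
    simp_rw [hw]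
    exact blockDiagonalFibers_one
  · have hj : ∀ v (h : κ j = v), μ (κ j) ⟨j, rfl⟩ = μ v ⟨j, h⟩ := fun v h => by subst h; rfl
    dsimp only
    rw [hj _ hκ]
    exact hμ (κ l) (Subtype.mk_le_mk.2 hjl.le)
  · rw [← blockDiagonalFibers_submatrix hblk, conjTranspose_blockDiagonalFibers,
      blockDiagonalFibers_mul, blockDiagonalFibers_mul]
    simp_rw [hconj]
    exact blockDiagonalFibers_diagonal _

section Fock

variable {d : ℕ}

def fockInner (x y : Finset (Fin d) → ℂ) : ℂ := ∑ s, star (x s) * y s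

def HasParticleNumber (n : ℕ) (x : Finset (Fin d) → ℂ) : Prop :=
  ∀ s : Finset (Fin d), s.card ≠ n → x s = 0

lemma fockInner_create (k : Fin d) (x y : Finset (Fin d) → ℂ) :
    fockInner x (create k y) = fockInner (annih k x) y := by
  simp only [fockInner]
  rw [sum_univ_eq_sum_powerset_erase k, sum_univ_eq_sum_powerset_erase k]
  refine sum_congr rfl fun t ht => ?_
  have hk := notMem_of_mem_powerset_erase ht
  simp only [create, annih, hk, mem_insert, or_false, erase_insert_eq_erase, erase_eq_of_notMem,
    ↓reduceIte, not_false_eq_true, star_mul', star_pow, star_neg, star_one, star_zero, mul_zero,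
    zero_mul, zero_add, add_zero]
  ring

lemma create_annih_self (j : Fin d) (x : Finset (Fin d) → ℂ) (s : Finset (Fin d)) :
    create j (annih j x) s = if j ∈ s then x s else 0 := by
  by_cases hj : j ∈ s
  · simp [create, annih, hj, ← mul_assoc, ← pow_add, ← two_mul, pow_mul]
  · simp [create, hj]

lemma HasParticleNumber.annih {n : ℕ} {x : Finset (Fin d) → ℂ} (hx : HasParticleNumber n x)
    (l : Fin d) : HasParticleNumber (n - 1) (annih l x) := by
  intro s hs
  by_cases hl : l ∈ s
  · simp [_root_.annih, hl]
  · simp only [_root_.annih, if_neg hl]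
    rw [hx _ (by rw [card_insert_of_notMem hl]; omega), mul_zero]

lemma annih_ne_zero {k : Fin d} {x : Finset (Fin d) → ℂ} {t : Finset (Fin d)}
    (h : annih k x t ≠ 0) : k ∉ t ∧ x (insert k t) ≠ 0 := by
  by_cases hk : k ∈ t
  · simp [annih, hk] at h
  · simp only [annih, if_neg hk] at h
    exact ⟨hk, right_ne_zero_of_mul h⟩

lemma fockInner_sum_mul_sum {ι : Type*} [Fintype ι] (a b : ι → ℂ)
    (X Y : ι → Finset (Fin d) → ℂ) :
    fockInner (fun t => ∑ p, a p * X p t) (fun t => ∑ q, b q * Y q t)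
      = ∑ p, ∑ q, star (a p) * b q * fockInner (X p) (Y q) := by
  simp only [fockInner, star_sum, star_mul', sum_mul, mul_sum]
  rw [sum_comm, sum_comm_cycle]
  exact sum_congr rfl fun p _ => sum_congr rfl fun q _ => sum_congr rfl fun s _ => by ring

def fockRdm (x y : Finset (Fin d) → ℂ) : Matrix (Fin d) (Fin d) ℂ :=
  of fun j k => fockInner (annih k x) (annih j y)

lemma trace_fockRdm {n : ℕ} (x : Finset (Fin d) → ℂ) {y : Finset (Fin d) → ℂ}
    (hy : HasParticleNumber n y) : (fockRdm x y).trace = n * fockInner x y := by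
  have hs : ∀ s : Finset (Fin d),
      ∑ j, star (x s) * create j (annih j y) s = n * (star (x s) * y s) := by
    intro s
    simp_rw [create_annih_self, mul_ite, mul_zero]
    rw [sum_ite_mem, univ_inter, sum_const, nsmul_eq_mul]
    by_cases h : s.card = n
    · rw [h]
    · simp [hy s h]
  have hdiag : ∀ j, fockRdm x y j j = fockInner x (create j (annih j y)) := fun j =>
    (fockInner_create j x _).symm
  simp only [trace, Matrix.diag, hdiag, fockInner]
  rw [sum_comm, mul_sum]
  exact sum_congr rfl fun s _ => hs s

end Fock

section Compound

variable {d : ℕ}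

def minorDet (u : Matrix (Fin d) (Fin d) ℂ) (s t : Finset (Fin d)) : ℂ :=
  if h : t.card = s.card then
    (of fun a b : Fin s.card => u (s.orderEmbOfFin rfl a) (t.orderEmbOfFin h b)).det
  else 0

lemma minorDet_eq (u : Matrix (Fin d) (Fin d) ℂ) {s t : Finset (Fin d)} {n : ℕ}
    (hs : s.card = n) (ht : t.card = n) :
    minorDet u s t
      = (of fun a b : Fin n => u (s.orderEmbOfFin hs a) (t.orderEmbOfFin ht b)).det := by
  subst hs
  rw [minorDet, dif_pos ht]

lemma minorDet_of_card_ne (u : Matrix (Fin d) (Fin d) ℂ) {s t : Finset (Fin d)}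
    (h : t.card ≠ s.card) : minorDet u s t = 0 := dif_neg h

section Laplace

variable (u : Matrix (Fin d) (Fin d) ℂ) {n : ℕ} {t t' : Finset (Fin d)}
  (ht : t.card = n) (ht' : t'.card = n + 1)

lemma det_cases_row_of_mem {j : Fin d} (hj : j ∈ t) :
    (of fun a b : Fin (n + 1) =>
      u (Fin.cases j (t.orderEmbOfFin ht) a) (t'.orderEmbOfFin ht' b)).det = 0 := by
  obtain ⟨a, ha⟩ : j ∈ Set.range (t.orderEmbOfFin ht) := by rwa [range_orderEmbOfFin]
  exact det_zero_of_row_eq (Fin.succ_ne_zero a).symm (funext fun b => by simp [ha])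

lemma det_cases_row_of_notMem {j : Fin d} (hj : j ∉ t) :
    (of fun a b : Fin (n + 1) =>
      u (Fin.cases j (t.orderEmbOfFin ht) a) (t'.orderEmbOfFin ht' b)).det
    = (-1 : ℂ) ^ (t.filter (· < j)).card * minorDet u (insert j t) t' := by
  have hs : (insert j t).card = n + 1 := by rw [card_insert_of_notMem hj, ht]
  obtain ⟨i, hi⟩ : j ∈ Set.range ((insert j t).orderEmbOfFin hs) := by
    rw [range_orderEmbOfFin]; exact mem_insert_self j t
  have he : ((insert j t).erase ((insert j t).orderEmbOfFin hs i)).card = n := by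
    rw [hi, erase_insert hj, ht]
  have hrows : (of fun a b : Fin (n + 1) =>
        u (Fin.cases j (t.orderEmbOfFin ht) a) (t'.orderEmbOfFin ht' b))
      = (of fun a b : Fin (n + 1) =>
          u ((insert j t).orderEmbOfFin hs a) (t'.orderEmbOfFin ht' b)).submatrix
          i.cycleRange.symm id := by
    ext a b
    cases a using Fin.cases with
    | zero => simp [hi]
    | succ a =>
      simp only [submatrix_apply, of_apply, Fin.cases_succ, Fin.cycleRange_symm_succ, id,
        ← orderEmbOfFin_erase hs i he a]
      congr 2
      have : (insert j t).erase ((insert j t).orderEmbOfFin hs i) = t := by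
        rw [hi, erase_insert hj]
      simp only [this]
  have hsign : (t.filter (· < j)).card = i := by
    rw [← card_filter_lt_orderEmbOfFin hs i, hi, filter_insert, if_neg (lt_irrefl j)]
  rw [hrows, det_permute, minorDet_eq u hs ht', Equiv.Perm.sign_symm, Fin.sign_cycleRange, hsign]
  push_cast
  ring

lemma det_cases_row_eq_sum (j : Fin d) :
    (of fun a b : Fin (n + 1) =>
      u (Fin.cases j (t.orderEmbOfFin ht) a) (t'.orderEmbOfFin ht' b)).det
    = ∑ l ∈ t', (-1 : ℂ) ^ (t'.filter (· < l)).card * u j l * minorDet u t (t'.erase l) := by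
  rw [det_succ_row_zero, sum_eq_sum_orderEmbOfFin ht']
  refine sum_congr rfl fun b _ => ?_
  have he : (t'.erase (t'.orderEmbOfFin ht' b)).card = n := by
    rw [card_erase_of_mem (orderEmbOfFin_mem _ _ _), ht', Nat.add_sub_cancel]
  have hminor : (of fun a b' : Fin (n + 1) =>
        u (Fin.cases j (t.orderEmbOfFin ht) a) (t'.orderEmbOfFin ht' b')).submatrix
        Fin.succ b.succAbove
      = of fun a b' : Fin n =>
        u (t.orderEmbOfFin ht a) ((t'.erase (t'.orderEmbOfFin ht' b)).orderEmbOfFin he b') := by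
    ext a b'
    simp [orderEmbOfFin_erase ht' b he]
  rw [hminor, ← minorDet_eq u ht he, card_filter_lt_orderEmbOfFin]
  simp only [of_apply, Fin.cases_zero]

end Laplace

lemma sum_sign_mul_minorDet_erase (u : Matrix (Fin d) (Fin d) ℂ) (t t' : Finset (Fin d))
    (j : Fin d) :
    ∑ l ∈ t', (-1 : ℂ) ^ (t'.filter (· < l)).card * u j l * minorDet u t (t'.erase l)
    = if j ∈ t then 0 else (-1 : ℂ) ^ (t.filter (· < j)).card * minorDet u (insert j t) t' := by
  by_cases ht' : t'.card = t.card + 1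
  · rw [← det_cases_row_eq_sum u rfl ht']
    split_ifs with hj
    · exact det_cases_row_of_mem u rfl ht' hj
    · exact det_cases_row_of_notMem u rfl ht' hj
  · rw [sum_eq_zero fun l hl => by
      have := card_pos.2 ⟨l, hl⟩
      rw [minorDet_of_card_ne u (by rw [card_erase_of_mem hl]; omega), mul_zero]]
    split_ifs with hj
    · rfl
    · rw [minorDet_of_card_ne u (by rw [card_insert_of_notMem hj]; omega), mul_zero]

section FockAct

variable (u : Matrix (Fin d) (Fin d) ℂ)

def fockAct (x : Finset (Fin d) → ℂ) : Finset (Fin d) → ℂ :=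
  fun s => ∑ t, minorDet u s t * x t

lemma fockAct_annih_apply (l : Fin d) (x : Finset (Fin d) → ℂ) (t : Finset (Fin d)) :
    fockAct u (annih l x) t = ∑ t', if l ∈ t' then
      (-1 : ℂ) ^ (t'.filter (· < l)).card * minorDet u t (t'.erase l) * x t' else 0 := by
  simp only [fockAct]
  rw [sum_univ_eq_sum_powerset_erase l, sum_univ_eq_sum_powerset_erase l]
  refine sum_congr rfl fun r hr => ?_
  have hl := notMem_of_mem_powerset_erase hr
  have hsign : (insert l r).filter (· < l) = r.filter (· < l) := by
    rw [filter_insert, if_neg (lt_irrefl l)]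
  simp only [annih, hl, hsign, mem_insert, or_false, erase_insert_eq_erase, erase_eq_of_notMem,
    ↓reduceIte, not_false_eq_true, mul_zero, zero_add, add_zero]
  ring

lemma annih_fockAct (j : Fin d) (x : Finset (Fin d) → ℂ) (t : Finset (Fin d)) :
    annih j (fockAct u x) t = ∑ l, u j l * fockAct u (annih l x) t := by
  simp only [fockAct_annih_apply, mul_sum, mul_ite, mul_zero]
  rw [sum_comm]
  simp_rw [← sum_filter, filter_mem_eq_inter, univ_inter]
  calc annih j (fockAct u x) t
      = ∑ t', (if j ∈ t then 0 else
          (-1 : ℂ) ^ (t.filter (· < j)).card * minorDet u (insert j t) t') * x t' := by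
        by_cases hj : j ∈ t
        · simp [annih, hj]
        · simp [annih, hj, fockAct, mul_sum, mul_assoc]
    _ = _ := by
        simp_rw [← sum_sign_mul_minorDet_erase, sum_mul]
        exact sum_congr rfl fun t' _ => sum_congr rfl fun l _ => by ring

lemma fockRdm_fockAct (x y : Finset (Fin d) → ℂ) :
    fockRdm (fockAct u x) (fockAct u y)
      = u * (of fun p q => fockInner (fockAct u (annih q x)) (fockAct u (annih p y))) * uᴴ := by
  ext j k
  have hx := funext (annih_fockAct u k x)
  have hy := funext (annih_fockAct u j y)
  simp only [fockRdm, of_apply, hx, hy, fockInner_sum_mul_sum, mul_apply, conjTranspose_apply,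
    sum_mul]
  exact sum_congr rfl fun p _ => sum_congr rfl fun q _ => by ring

lemma HasParticleNumber.fockAct {n : ℕ} {x : Finset (Fin d) → ℂ} (hx : HasParticleNumber n x) :
    HasParticleNumber n (fockAct u x) := by
  intro s hs
  refine sum_eq_zero fun t _ => ?_
  by_cases hc : t.card = s.card
  · rw [hx t (by omega), mul_zero]
  · rw [minorDet_of_card_ne u hc, zero_mul]

lemma fockAct_eq_self_of_hasParticleNumber_zero {x : Finset (Fin d) → ℂ}
    (hx : HasParticleNumber 0 x) : fockAct u x = x := by
  ext s
  rw [fockAct, sum_eq_single ∅ (fun t _ ht => by rw [hx t (by simpa using ht), mul_zero])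
    (by simp)]
  by_cases hs : s = ∅
  · rw [hs, minorDet_eq u card_empty card_empty, det_fin_zero, one_mul]
  · have hs' : s.card ≠ 0 := by rwa [Ne, card_eq_zero]
    rw [hx s hs', minorDet_of_card_ne u (by rw [card_empty]; exact hs'.symm), zero_mul]

-- `trace (fockRdm x y) = n * fockInner x y` on `n`-particle vectors and conjugation by `u`
-- preserves traces, so by `fockRdm_fockAct` the claim for `n + 1` particles follows from `n`.
lemma fockInner_fockAct (hu : uᴴ * u = 1) {n : ℕ} {x y : Finset (Fin d) → ℂ}
    (hx : HasParticleNumber n x) (hy : HasParticleNumber n y) :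
    fockInner (fockAct u x) (fockAct u y) = fockInner x y := by
  induction n generalizing x y with
  | zero =>
    rw [fockAct_eq_self_of_hasParticleNumber_zero u hx,
      fockAct_eq_self_of_hasParticleNumber_zero u hy]
  | succ n ih =>
    have hrdm : (of fun p q => fockInner (fockAct u (annih q x)) (fockAct u (annih p y)))
        = fockRdm x y := by
      ext p q
      exact ih (hx.annih q) (hy.annih p)
    have key : ((n + 1 : ℕ) : ℂ) * fockInner (fockAct u x) (fockAct u y)
        = ((n + 1 : ℕ) : ℂ) * fockInner x y := by
      rw [← trace_fockRdm _ (hy.fockAct u), ← trace_fockRdm _ hy, fockRdm_fockAct, hrdm,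
        trace_mul_cycle, hu, Matrix.one_mul]
    exact mul_left_cancel₀ (Nat.cast_ne_zero.2 n.succ_ne_zero) key

end FockAct

end Compound

section CoeffVec

variable {N d : ℕ}

lemma hasParticleNumber_embed (c : CoeffVec N d) : HasParticleNumber N (embed c) :=
  fun _ hs => dif_neg hs

lemma sum_embed {M : Type*} [AddCommMonoid M] (c : CoeffVec N d) (g : Finset (Fin d) → ℂ → M)
    (hg : ∀ s, g s 0 = 0) : ∑ s, g s (embed c s) = ∑ s : Config N d, g s (c s) := by
  have h0 : ∑ s : {s : Finset (Fin d) // ¬s.card = N}, g s (embed c s) = 0 :=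
    sum_eq_zero fun s _ => by rw [hasParticleNumber_embed c s s.2, hg]
  rw [← Fintype.sum_subtype_add_sum_subtype (·.card = N), h0, add_zero]
  exact sum_congr rfl fun s _ => by rw [embed, dif_pos s.2]

lemma embed_ne_zero {c : CoeffVec N d} {s : Finset (Fin d)} (h : embed c s ≠ 0) :
    ∃ hs : s.card = N, c ⟨s, hs⟩ ≠ 0 := by
  by_cases hs : s.card = N
  · exact ⟨hs, by rwa [embed, dif_pos hs] at h⟩
  · exact absurd (hasParticleNumber_embed c s hs) h

lemma embed_compAct (u : Matrix (Fin d) (Fin d) ℂ) (c : CoeffVec N d) :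
    embed (compAct u c) = fockAct u (embed c) := by
  ext s
  by_cases hs : s.card = N
  · rw [embed, dif_pos hs, fockAct, sum_embed c (fun t z => minorDet u s t * z) (by simp)]
    exact sum_congr rfl fun t _ => by
      simp only [minorDet_eq u hs t.2, Finset.coe_orderIsoOfFin_apply]
  · rw [hasParticleNumber_embed _ s hs, (hasParticleNumber_embed c).fockAct u s hs]

lemma rho1_eq_fockRdm (c : CoeffVec N d) : rho1 c = fockRdm (embed c) (embed c) := by
  ext j k
  exact fockInner_create k (embed c) _

lemma rho1_isHermitian (c : CoeffVec N d) : (rho1 c).IsHermitian := by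
  ext j k
  simp only [rho1_eq_fockRdm, conjTranspose_apply, fockRdm, of_apply, fockInner, star_sum,
    star_mul', star_star, mul_comm]

lemma rho1_apply_self (c : CoeffVec N d) (j : Fin d) : rho1 c j j = occ c j := by
  simp only [rho1, Bform, of_apply, create_annih_self]
  rw [sum_embed c (fun s z => star z * if j ∈ s then z else 0) (by simp), occ]
  push_cast
  refine sum_congr rfl fun s _ => ?_
  split_ifs <;> simp [Complex.conj_mul']

lemma rho1_compAct (u : Matrix (Fin d) (Fin d) ℂ) (hu : uᴴ * u = 1) (c : CoeffVec N d) :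
    rho1 (compAct u c) = u * rho1 c * uᴴ := by
  have hc := hasParticleNumber_embed c
  rw [rho1_eq_fockRdm, rho1_eq_fockRdm, embed_compAct, fockRdm_fockAct]
  congr 2
  ext p q
  exact fockInner_fockAct u hu (hc.annih q) (hc.annih p)

end CoeffVec

section SelectionRule

variable {N d : ℕ} (κ0 : ℝ) (κ : Fin d → ℝ)

lemma rho1_eq_zero_of_ne {c : CoeffVec N d}
    (hsupp : ∀ s : Config N d, c s ≠ 0 → κ0 + ∑ j ∈ s.val, κ j = 0)
    {j k : Fin d} (hjk : κ j ≠ κ k) : rho1 c j k = 0 := by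
  rw [rho1_eq_fockRdm, fockRdm, of_apply, fockInner]
  by_contra h
  obtain ⟨t, -, ht⟩ := exists_ne_zero_of_sum_ne_zero h
  have hsum : ∀ i, annih i (embed c) t ≠ 0 → κ0 + κ i + ∑ m ∈ t, κ m = 0 := by
    intro i hi
    obtain ⟨hit, hc⟩ := annih_ne_zero hi
    obtain ⟨hs, hcs⟩ := embed_ne_zero hc
    simpa [sum_insert hit, add_assoc] using hsupp _ hcs
  have hk := hsum k (star_ne_zero.1 (left_ne_zero_of_mul ht))
  have hj := hsum j (right_ne_zero_of_mul ht)
  exact hjk (by linarith)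

variable {κ} {u : Matrix (Fin d) (Fin d) ℂ}

lemma sum_eq_sum_of_minorDet_ne_zero (hu : ∀ j l, κ j ≠ κ l → u j l = 0) {s t : Finset (Fin d)}
    (h : minorDet u s t ≠ 0) :
    ∑ j ∈ s, κ j = ∑ j ∈ t, κ j := by
  have ht : t.card = s.card := by
    by_contra hc
    exact h (minorDet_of_card_ne u hc)
  rw [minorDet_eq u rfl ht] at h
  obtain ⟨σ, hσ⟩ := exists_perm_forall_ne_zero_of_det_ne_zero h
  rw [sum_eq_sum_orderEmbOfFin rfl, sum_eq_sum_orderEmbOfFin ht, ← Equiv.sum_comp σ]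
  exact sum_congr rfl fun b _ => by_contra fun hb => hσ b (hu _ _ hb)

lemma compAct_support (hu : ∀ j l, κ j ≠ κ l → u j l = 0) {c : CoeffVec N d}
    (hsupp : ∀ s : Config N d, c s ≠ 0 → κ0 + ∑ j ∈ s.val, κ j = 0)
    (s : Config N d) (hs : compAct u c s ≠ 0) : κ0 + ∑ j ∈ s.val, κ j = 0 := by
  have hs' : fockAct u (embed c) s ≠ 0 := by
    rwa [← embed_compAct, embed, dif_pos s.2]
  obtain ⟨t, -, ht⟩ := exists_ne_zero_of_sum_ne_zero hs'
  obtain ⟨_, hct⟩ := embed_ne_zero (right_ne_zero_of_mul ht)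
  rw [sum_eq_sum_of_minorDet_ne_zero hu (left_ne_zero_of_mul ht)]
  exact hsupp _ hct

end SelectionRule

theorem stmt_6_general (N d : ℕ)
    (κ0 : ℝ) (κ : Fin d → ℝ) (c : CoeffVec N d)
    (hsupp : ∀ s : Config N d, c s ≠ 0 → κ0 + ∑ j ∈ s.val, κ j = 0) :
    ∃ u : Matrix (Fin d) (Fin d) ℂ,
      uᴴ * u = 1 ∧ u * uᴴ = 1 ∧
      (∀ j l : Fin d, κ j ≠ κ l → u j l = 0) ∧
      (∀ j k : Fin d, j ≠ k → rho1 (compAct u c) j k = 0) ∧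
      (∀ s : Config N d, compAct u c s ≠ 0 → κ0 + ∑ j ∈ s.val, κ j = 0) ∧
      (∀ j l : Fin d, j < l → κ j = κ l →
        occ (compAct u c) l ≤ occ (compAct u c) j) := by
  obtain ⟨u, hu, hblk, μ, hμ, hdiag⟩ := (rho1_isHermitian c).exists_blockDiagonal_conj_eq_diagonal
    κ fun j k => rho1_eq_zero_of_ne κ0 κ hsupp
  have hrho : rho1 (compAct u c) = diagonal fun j => (μ j : ℂ) := by
    rw [rho1_compAct u hu, hdiag]
    rfl
  have hocc : ∀ i, occ (compAct u c) i = μ i := fun i => by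
    have := rho1_apply_self (compAct u c) i
    rw [hrho, diagonal_apply_eq] at this
    exact_mod_cast this.symm
  refine ⟨u, hu, mul_eq_one_comm.1 hu, hblk, fun j k hjk => by rw [hrho, diagonal_apply_ne _ hjk],
    compAct_support κ0 hblk hsupp, fun j l hjl hκ => ?_⟩
  rw [hocc, hocc]
  exact hμ j l hjl hκ

/-- Converse selection rule: if every configuration in the support of the nonzero coefficient
vector `c` saturates the constraint `κ₀ + Σ_{j∈s} κ_j = 0`, then there is a unitary `u`,
block-diagonal with respect to the level sets of `κ`, such that `ρ₁(u·c)` is diagonal, the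
support of `u·c` still saturates the constraint, and the occupation numbers are ordered
decreasingly within each block of equal `κ`-values. -/
theorem stmt_6 (N d : ℕ) (hN : 1 ≤ N) (hNd : N ≤ d)
    (κ0 : ℝ) (κ : Fin d → ℝ) (c : CoeffVec N d) (hc : c ≠ 0)
    (hsupp : ∀ s : Config N d, c s ≠ 0 → κ0 + ∑ j ∈ s.val, κ j = 0) :
    ∃ u : Matrix (Fin d) (Fin d) ℂ,
      uᴴ * u = 1 ∧ u * uᴴ = 1 ∧
      (∀ j l : Fin d, κ j ≠ κ l → u j l = 0) ∧
      (∀ j k : Fin d, j ≠ k → rho1 (compAct u c) j k = 0) ∧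
      (∀ s : Config N d, compAct u c s ≠ 0 → κ0 + ∑ j ∈ s.val, κ j = 0) ∧
      (∀ j l : Fin d, j < l → κ j = κ l →
        occ (compAct u c) l ≤ occ (compAct u c) j) :=
  stmt_6_general N d κ0 κ c hsupp
end
end

section
/- Let κ₀ ∈ ℝ and κ ∈ ℝ^d, and let c be an N-fermion coefficient vector such that every configuration s in the support of c satisfies κ₀ + Σ_{j∈s} κ_j = 0. Then ρ₁(c)_{jl} = 0 for all indices j, l with κ_j ≠ κ_l; i.e., the one-particle reduced density matrix of any state supported on configurations saturating the constraint is block-diagonal with respect to the level sets of κ. -/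
open scoped BigOperators

noncomputable section

/-- If every configuration in the support of `c` saturates the constraint
`κ₀ + Σ_{j∈s} κ_j = 0`, then `ρ₁(c)` is block-diagonal with respect to the level sets of
`κ`: `ρ₁(c)_{jl} = 0` whenever `κ_j ≠ κ_l`. -/
theorem stmt_7 (N d : ℕ) (hN : 1 ≤ N) (hNd : N ≤ d)
    (κ0 : ℝ) (κ : Fin d → ℝ) (c : CoeffVec N d)
    (hsupp : ∀ s : Config N d, c s ≠ 0 → κ0 + ∑ j ∈ s.val, κ j = 0) :
    ∀ j l : Fin d, κ j ≠ κ l → rho1 c j l = 0 := by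
  intro j l hjl
  show ∑ s : Finset (Fin d), star (embed c s) * create l (annih j (embed c)) s = 0
  apply Finset.sum_eq_zero
  intro s _
  by_cases hs : embed c s = 0
  · rw [hs]; simp
  · unfold create annih
    by_cases hls : l ∈ s
    · simp only [hls, if_true]
      by_cases hjs : j ∈ s.erase l
      · simp [hjs]
      · simp only [hjs, if_false]
        by_cases ht : embed c (insert j (s.erase l)) = 0
        · rw [ht]; ring
        · exfalso
          unfold embed at hs ht
          by_cases hcs : s.card = N
          · simp only [hcs, dif_pos] at hs
            have hct : (insert j (s.erase l)).card = N := by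
              rw [Finset.card_insert_of_notMem hjs, Finset.card_erase_of_mem hls, hcs]
              omega
            simp only [hct, dif_pos] at ht
            have h1 := hsupp ⟨s, hcs⟩ hs
            have h2 := hsupp ⟨insert j (s.erase l), hct⟩ ht
            simp only at h1 h2
            rw [Finset.sum_insert hjs, Finset.sum_erase_eq_sub hls] at h2
            apply hjl
            linarith
          · exact hs (dif_neg hcs)
    · simp [hls]
end
end

section
/- Let κ₀ ∈ ℝ and κ ∈ ℝ^d, and let u be a d×d complex matrix with u_{jl} = 0 whenever κ_j ≠ κ_l. If c is an N-fermion coefficient vector such that every configuration s in the support of c satisfies κ₀ + Σ_{j∈s} κ_j = 0, then every configuration s in the support of u·c also satisfies κ₀ + Σ_{j∈s} κ_j = 0; i.e., the ansatz space spanned by the configurations saturating the constraint is invariant under the compound action of block-diagonal matrices. -/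
open scoped BigOperators

noncomputable section

/-- The ansatz space spanned by the configurations saturating the constraint
`κ₀ + Σ_{j∈s} κ_j = 0` is invariant under the compound action of matrices that are
block-diagonal with respect to the level sets of `κ`. -/
theorem stmt_8 (N d : ℕ) (hN : 1 ≤ N) (hNd : N ≤ d)
    (κ0 : ℝ) (κ : Fin d → ℝ) (u : Matrix (Fin d) (Fin d) ℂ)
    (hu : ∀ j l : Fin d, κ j ≠ κ l → u j l = 0)
    (c : CoeffVec N d)
    (hsupp : ∀ s : Config N d, c s ≠ 0 → κ0 + ∑ j ∈ s.val, κ j = 0) :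
    ∀ s : Config N d, compAct u c s ≠ 0 → κ0 + ∑ j ∈ s.val, κ j = 0 := by
  have sum_eq : ∀ (s : Finset (Fin d)) (h : s.card = N),
      ∑ j ∈ s, κ j = ∑ a : Fin N, κ (s.orderIsoOfFin h a) := by
    intro s h
    rw [← Finset.sum_coe_sort s κ]
    exact (Equiv.sum_comp (s.orderIsoOfFin h).toEquiv (fun x => κ ↑x)).symm
  intro s hs
  obtain ⟨t, -, ht⟩ := Finset.exists_ne_zero_of_sum_ne_zero hs
  have hdet : (Matrix.of fun a b : Fin N =>
      u (↑(s.val.orderIsoOfFin s.2 a)) (↑(t.val.orderIsoOfFin t.2 b))).det ≠ 0 :=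
    fun h => ht (by rw [h, zero_mul])
  have hct : c t ≠ 0 := fun h => ht (by rw [h, mul_zero])
  rw [Matrix.det_apply] at hdet
  obtain ⟨σ, -, hσ⟩ := Finset.exists_ne_zero_of_sum_ne_zero hdet
  have hprod : ∀ a : Fin N,
      u (↑(s.val.orderIsoOfFin s.2 (σ a))) (↑(t.val.orderIsoOfFin t.2 a)) ≠ 0 := by
    intro a
    have h2 : (∏ b : Fin N,
        (Matrix.of fun a b : Fin N =>
          u (↑(s.val.orderIsoOfFin s.2 a)) (↑(t.val.orderIsoOfFin t.2 b))) (σ b) b) ≠ 0 :=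
      fun h => hσ (by rw [h, smul_zero])
    exact Finset.prod_ne_zero_iff.mp h2 a (Finset.mem_univ a)
  have hκ : ∀ a : Fin N,
      κ (↑(s.val.orderIsoOfFin s.2 (σ a))) = κ (↑(t.val.orderIsoOfFin t.2 a)) := by
    intro a
    by_contra h
    exact hprod a (hu _ _ h)
  have hsum : ∑ j ∈ s.val, κ j = ∑ j ∈ t.val, κ j := by
    rw [sum_eq s.val s.2, sum_eq t.val t.2, ← Equiv.sum_comp σ
      (fun a => κ ((s.val.orderIsoOfFin s.2 a) : Fin d))]
    exact Finset.sum_congr rfl fun a _ => hκ a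
  rw [hsum]
  exact hsupp t hct
end
end

section
/- For every unitary d×d complex matrix u and every N-fermion coefficient vector c, one has ρ₁(u·c) = u · ρ₁(c) · uᴴ, where uᴴ is the conjugate transpose of u; i.e., the map c ↦ ρ₁(c) is equivariant: local (one-particle) unitary transformations of the state act by conjugation on the one-particle reduced density matrix. -/
open scoped BigOperators

noncomputable section

namespace Stmt9Aux

open Matrix Finset

variable {d : ℕ}

/-- The square submatrix of `u` with rows `s` and columns `t`, listed in increasing order. -/
def subM (u : Matrix (Fin d) (Fin d) ℂ) (s t : Finset (Fin d)) {k : ℕ}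
    (hs : s.card = k) (ht : t.card = k) : Matrix (Fin k) (Fin k) ℂ :=
  Matrix.of fun a b => u (s.orderEmbOfFin hs a) (t.orderEmbOfFin ht b)

/-- The compound-matrix action on the full Fock space. -/
def FockAct (u : Matrix (Fin d) (Fin d) ℂ) (x : Finset (Fin d) → ℂ) :
    Finset (Fin d) → ℂ :=
  fun s => ∑ t : Finset (Fin d),
    if h : t.card = s.card then (subM u s t rfl h).det * x t else 0

/-- Fock-space inner product. -/
def finner (x y : Finset (Fin d) → ℂ) : ℂ := ∑ s : Finset (Fin d), star (x s) * y s

lemma subM_det_congr (u : Matrix (Fin d) (Fin d) ℂ) (s t : Finset (Fin d)) {k k' : ℕ}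
    (hs : s.card = k) (ht : t.card = k) (hs' : s.card = k') (ht' : t.card = k') :
    (subM u s t hs ht).det = (subM u s t hs' ht').det := by
  subst hs; subst hs'; rfl

lemma filter_lt_card (s : Finset (Fin d)) {k : ℕ} (hs : s.card = k) (p : Fin k) :
    (s.filter (fun m => m < s.orderEmbOfFin hs p)).card = p := by
  have himg : s.filter (fun m => m < s.orderEmbOfFin hs p)
      = (Finset.Iio p).image (s.orderEmbOfFin hs) := by
    ext y
    simp only [Finset.mem_filter, Finset.mem_image, Finset.mem_Iio]
    constructor
    · rintro ⟨hy, hlt⟩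
      have : y ∈ Set.range (s.orderEmbOfFin hs) := by
        rw [Finset.range_orderEmbOfFin]; exact hy
      obtain ⟨a, rfl⟩ := this
      exact ⟨a, (s.orderEmbOfFin hs).lt_iff_lt.mp hlt, rfl⟩
    · rintro ⟨a, ha, rfl⟩
      exact ⟨Finset.orderEmbOfFin_mem s hs a, (s.orderEmbOfFin hs).lt_iff_lt.mpr ha⟩
  rw [himg, Finset.card_image_of_injective _ (s.orderEmbOfFin hs).injective, Fin.card_Iio]

lemma orderEmbOfFin_erase (s : Finset (Fin d)) {k : ℕ} (hs : s.card = k + 1) (p : Fin (k+1))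
    (hse : (s.erase (s.orderEmbOfFin hs p)).card = k) (a : Fin k) :
    (s.erase (s.orderEmbOfFin hs p)).orderEmbOfFin hse a =
      s.orderEmbOfFin hs (p.succAbove a) := by
  have h := Finset.orderEmbOfFin_unique hse
    (f := fun a : Fin k => s.orderEmbOfFin hs (p.succAbove a)) ?_ ?_
  · exact (congrFun h a).symm
  · intro a
    rw [Finset.mem_erase]
    refine ⟨fun h' => ?_, Finset.orderEmbOfFin_mem s hs _⟩
    exact Fin.succAbove_ne p a ((s.orderEmbOfFin hs).injective h')
  · exact (s.orderEmbOfFin hs).strictMono.comp (Fin.strictMono_succAbove p)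

lemma orderEmbOfFin_congr {s1 s2 : Finset (Fin d)} (h : s1 = s2) {k : ℕ}
    (h1 : s1.card = k) (h2 : s2.card = k) (a : Fin k) :
    s1.orderEmbOfFin h1 a = s2.orderEmbOfFin h2 a := by subst h; rfl

lemma card_erase_of_mem' {t' : Finset (Fin d)} {l : Fin d} {k : ℕ}
    (ht' : t'.card = k + 1) (hl : l ∈ t') : (t'.erase l).card = k := by
  rw [Finset.card_erase_of_mem hl, ht']; rfl

/-- Bordered matrix: first row indexed by `j`, remaining rows by `t`, columns by `t'`. -/
def matA (u : Matrix (Fin d) (Fin d) ℂ) (j : Fin d) (t t' : Finset (Fin d)) {k : ℕ}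
    (ht : t.card = k) (ht' : t'.card = k + 1) : Matrix (Fin (k+1)) (Fin (k+1)) ℂ :=
  Matrix.of (Fin.cons (fun b => u j (t'.orderEmbOfFin ht' b))
    (fun a b => u (t.orderEmbOfFin ht a) (t'.orderEmbOfFin ht' b)))

lemma matA_zero (u : Matrix (Fin d) (Fin d) ℂ) (j : Fin d) (t t' : Finset (Fin d)) {k : ℕ}
    (ht : t.card = k) (ht' : t'.card = k + 1) (b : Fin (k+1)) :
    matA u j t t' ht ht' 0 b = u j (t'.orderEmbOfFin ht' b) := by
  simp [matA]

lemma matA_succ (u : Matrix (Fin d) (Fin d) ℂ) (j : Fin d) (t t' : Finset (Fin d)) {k : ℕ}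
    (ht : t.card = k) (ht' : t'.card = k + 1) (a : Fin k) (b : Fin (k+1)) :
    matA u j t t' ht ht' (Fin.succ a) b
      = u (t.orderEmbOfFin ht a) (t'.orderEmbOfFin ht' b) := by
  simp [matA]

lemma matA_det_laplace (u : Matrix (Fin d) (Fin d) ℂ) (j : Fin d) (t t' : Finset (Fin d))
    {k : ℕ} (ht : t.card = k) (ht' : t'.card = k + 1) :
    (matA u j t t' ht ht').det = ∑ b : Fin (k+1),
      (-1 : ℂ) ^ (b : ℕ) * u j (t'.orderEmbOfFin ht' b) *
        (subM u t (t'.erase (t'.orderEmbOfFin ht' b)) ht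
          (card_erase_of_mem' ht' (t'.orderEmbOfFin_mem ht' b))).det := by
  rw [Matrix.det_succ_row_zero]
  refine Finset.sum_congr rfl fun b _ => ?_
  have h1 : matA u j t t' ht ht' 0 b = u j (t'.orderEmbOfFin ht' b) := matA_zero ..
  have h2 : (matA u j t t' ht ht').submatrix Fin.succ b.succAbove
      = subM u t (t'.erase (t'.orderEmbOfFin ht' b)) ht
          (card_erase_of_mem' ht' (t'.orderEmbOfFin_mem ht' b)) := by
    ext a b'
    rw [Matrix.submatrix_apply, matA_succ,
      ← orderEmbOfFin_erase t' ht' b (card_erase_of_mem' ht' (t'.orderEmbOfFin_mem ht' b)) b']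
    rfl
  rw [h1, h2]

lemma matA_det_of_mem (u : Matrix (Fin d) (Fin d) ℂ) {j : Fin d} {t t' : Finset (Fin d)}
    {k : ℕ} (ht : t.card = k) (ht' : t'.card = k + 1) (hj : j ∈ t) :
    (matA u j t t' ht ht').det = 0 := by
  have : j ∈ Set.range (t.orderEmbOfFin ht) := by rw [Finset.range_orderEmbOfFin]; exact hj
  obtain ⟨p, hp⟩ := this
  refine Matrix.det_zero_of_row_eq (i := 0) (j := p.succ) (Fin.succ_ne_zero p).symm ?_
  funext b
  rw [matA_zero, matA_succ, hp]

lemma matA_det_of_not_mem (u : Matrix (Fin d) (Fin d) ℂ) {j : Fin d} {t t' : Finset (Fin d)}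
    {k : ℕ} (ht : t.card = k) (ht' : t'.card = k + 1) (hj : j ∉ t)
    (hs : (insert j t).card = k + 1) :
    (matA u j t t' ht ht').det =
      (-1 : ℂ) ^ ((t.filter (fun m => m < j)).card) * (subM u (insert j t) t' hs ht').det := by
  have hjs : j ∈ insert j t := Finset.mem_insert_self j t
  have : j ∈ Set.range ((insert j t).orderEmbOfFin hs) := by
    rw [Finset.range_orderEmbOfFin]; exact hjs
  obtain ⟨p, hpj⟩ := this
  have hp : (p : ℕ) = (t.filter (fun m => m < j)).card := by
    have h1 := filter_lt_card (insert j t) hs p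
    rw [hpj] at h1
    rw [← h1]
    congr 1
    rw [Finset.filter_insert]
    simp only [lt_self_iff_false, if_false]
  have hse : ((insert j t).erase ((insert j t).orderEmbOfFin hs p)).card = k := by
    rw [hpj, Finset.erase_insert hj, ht]
  have hrow : ∀ a : Fin k, (insert j t).orderEmbOfFin hs (p.succAbove a)
      = t.orderEmbOfFin ht a := by
    intro a
    rw [← orderEmbOfFin_erase (insert j t) hs p hse a]
    exact orderEmbOfFin_congr (by rw [hpj, Finset.erase_insert hj]) hse ht a
  have hexp : (subM u (insert j t) t' hs ht').det = ∑ b : Fin (k+1),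
      (-1:ℂ)^((p:ℕ)+(b:ℕ)) * u j (t'.orderEmbOfFin ht' b) *
        (subM u t (t'.erase (t'.orderEmbOfFin ht' b)) ht
          (card_erase_of_mem' ht' (t'.orderEmbOfFin_mem ht' b))).det := by
    rw [Matrix.det_succ_row _ p]
    refine Finset.sum_congr rfl fun b _ => ?_
    congr 1
    · congr 1
      show u ((insert j t).orderEmbOfFin hs p) (t'.orderEmbOfFin ht' b) = _
      rw [hpj]
    · congr 1
      ext a b'
      show u ((insert j t).orderEmbOfFin hs (p.succAbove a))
          (t'.orderEmbOfFin ht' (b.succAbove b')) = _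
      rw [hrow a,
        ← orderEmbOfFin_erase t' ht' b (card_erase_of_mem' ht' (t'.orderEmbOfFin_mem ht' b)) b']
      rfl
  have key : (subM u (insert j t) t' hs ht').det
      = (-1:ℂ)^(p:ℕ) * (matA u j t t' ht ht').det := by
    rw [matA_det_laplace, Finset.mul_sum, hexp]
    refine Finset.sum_congr rfl fun b _ => by rw [pow_add]; ring
  rw [key, ← hp, ← mul_assoc, ← pow_add]
  rw [Even.neg_one_pow ⟨(p:ℕ), rfl⟩, one_mul]

/-- The key intertwining relation: `f_j ∘ Γ(u) = Γ(u) ∘ ∑_l u_{jl} f_l`. -/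
lemma annih_fockAct (u : Matrix (Fin d) (Fin d) ℂ) (j : Fin d) (x : Finset (Fin d) → ℂ)
    (t : Finset (Fin d)) :
    annih j (FockAct u x) t = ∑ l : Fin d, u j l * FockAct u (annih l x) t := by
  classical
  -- the common middle expression
  have hmid : ∑ l : Fin d, u j l * FockAct u (annih l x) t
      = ∑ t' : Finset (Fin d), (if h : t'.card = t.card + 1
          then (matA u j t t' rfl h).det * x t' else 0) := by
    have hS : ∀ t' : Finset (Fin d), (if h : t'.card = t.card + 1
          then (matA u j t t' rfl h).det * x t' else 0)
        = ∑ l : Fin d, (if l ∈ t' then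
            (-1:ℂ)^((t'.filter (fun m => m < l)).card) * u j l *
              (if h'' : (t'.erase l).card = t.card
                then (subM u t (t'.erase l) rfl h'').det else 0) * x t'
            else 0) := by
      intro t'
      by_cases h : t'.card = t.card + 1
      · rw [dif_pos h, matA_det_laplace u j t t' rfl h, Finset.sum_mul,
          ← Finset.sum_filter]
        refine Finset.sum_bij (fun b _ => t'.orderEmbOfFin h b) ?_ ?_ ?_ ?_
        · intro b _
          rw [Finset.mem_filter]
          exact ⟨Finset.mem_univ _, Finset.orderEmbOfFin_mem t' h b⟩
        · intro a _ b _ hab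
          exact (t'.orderEmbOfFin h).injective hab
        · intro l hl
          rw [Finset.mem_filter] at hl
          have : l ∈ Set.range (t'.orderEmbOfFin h) := by
            rw [Finset.range_orderEmbOfFin]; exact hl.2
          obtain ⟨b, rfl⟩ := this
          exact ⟨b, Finset.mem_univ _, rfl⟩
        · intro b _
          rw [filter_lt_card t' h b,
            dif_pos (card_erase_of_mem' h (Finset.orderEmbOfFin_mem t' h b))]
      · rw [dif_neg h]
        symm; apply Finset.sum_eq_zero; intro l _
        by_cases hm : l ∈ t'
        · rw [if_pos hm]
          have h'' : ¬ (t'.erase l).card = t.card := by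
            intro hc
            apply h
            rw [← hc, Finset.card_erase_of_mem hm]
            have : 1 ≤ t'.card := Finset.card_pos.mpr ⟨l, hm⟩
            omega
          rw [dif_neg h'']
          ring
        · rw [if_neg hm]
    rw [Finset.sum_congr rfl (fun t' _ => hS t'), Finset.sum_comm]
    refine Finset.sum_congr rfl fun l _ => ?_
    rw [FockAct, Finset.mul_sum, ← Finset.sum_filter]
    rw [← Finset.sum_filter_of_ne (p := fun t'' => l ∉ t'')
      (f := fun t'' => u j l * (if h : t''.card = t.card
        then (subM u t t'' rfl h).det * annih l x t'' else 0)) ?_]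
    swap
    · intro t'' _ hne hl
      apply hne
      have : annih l x t'' = 0 := by
        show (if l ∈ t'' then 0 else _) = 0
        rw [if_pos hl]
      by_cases h : t''.card = t.card
      · simp only [dif_pos h, this, mul_zero]
      · simp only [dif_neg h, mul_zero]
    refine Finset.sum_nbij' (fun t'' => insert l t'') (fun t' => t'.erase l)
      ?_ ?_ ?_ ?_ ?_
    · intro t'' ht''
      rw [Finset.mem_filter] at ht'' ⊢
      exact ⟨Finset.mem_univ _, Finset.mem_insert_self l t''⟩
    · intro t' ht'
      rw [Finset.mem_filter] at ht' ⊢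
      exact ⟨Finset.mem_univ _, Finset.notMem_erase l t'⟩
    · intro t'' ht''
      rw [Finset.mem_filter] at ht''
      exact Finset.erase_insert ht''.2
    · intro t' ht'
      rw [Finset.mem_filter] at ht'
      exact Finset.insert_erase ht'.2
    · intro t'' ht''
      rw [Finset.mem_filter] at ht''
      have hlt : l ∉ t'' := ht''.2
      have hins : (insert l t'').card = t''.card + 1 :=
        Finset.card_insert_of_notMem hlt
      have hann : annih l x t''
          = (-1:ℂ)^((t''.filter (fun m => m < l)).card) * x (insert l t'') := by
        show (if l ∈ t'' then 0 else _) = _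
        rw [if_neg hlt]
      have hfilter : (insert l t'').filter (fun m => m < l)
          = t''.filter (fun m => m < l) := by
        rw [Finset.filter_insert]
        simp only [lt_self_iff_false, if_false]
      have herase : (insert l t'').erase l = t'' := Finset.erase_insert hlt
      by_cases h : t''.card = t.card
      · have h' : ((insert l t'').erase l).card = t.card := by rw [herase, h]
        rw [dif_pos h, hann, hfilter, dif_pos h']
        have hdet : (subM u t ((insert l t'').erase l) rfl h').det
            = (subM u t t'' rfl h).det := by
          refine congrArg Matrix.det ?_
          ext a b
          show u (t.orderEmbOfFin rfl a) (((insert l t'').erase l).orderEmbOfFin h' b) = _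
          rw [orderEmbOfFin_congr herase h' h b]
          rfl
        rw [hdet]
        ring
      · have h' : ¬ ((insert l t'').erase l).card = t.card := by rw [herase]; exact h
        rw [dif_neg h, dif_neg h', mul_zero]
        ring
  rw [hmid]
  by_cases hj : j ∈ t
  · rw [show annih j (FockAct u x) t = 0 from if_pos hj]
    symm; apply Finset.sum_eq_zero; intro t' _
    by_cases h : t'.card = t.card + 1
    · rw [dif_pos h, matA_det_of_mem u rfl h hj, zero_mul]
    · rw [dif_neg h]
  · have hins : (insert j t).card = t.card + 1 := Finset.card_insert_of_notMem hj
    rw [show annih j (FockAct u x) t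
        = (-1:ℂ)^((t.filter (fun m => m < j)).card) * FockAct u x (insert j t)
      from if_neg hj]
    rw [FockAct, Finset.mul_sum]
    refine Finset.sum_congr rfl fun t' _ => ?_
    by_cases h : t'.card = t.card + 1
    · have h2 : t'.card = (insert j t).card := by rw [hins]; exact h
      rw [dif_pos h2, dif_pos h, matA_det_of_not_mem u rfl h hj hins,
        subM_det_congr u (insert j t) t' rfl h2 hins h]
      ring
    · have h2 : ¬ t'.card = (insert j t).card := by rw [hins]; exact h
      rw [dif_neg h2, dif_neg h, mul_zero]

/-- Adjoint relation between creation and annihilation. -/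
lemma finner_create (k : Fin d) (x y : Finset (Fin d) → ℂ) :
    finner x (create k y) = finner (annih k x) y := by
  classical
  unfold finner
  rw [← Finset.sum_filter_of_ne (p := fun s => k ∈ s)
    (f := fun s => star (x s) * create k y s) ?_]
  swap
  · intro s _ hne
    by_contra hk
    apply hne
    show star (x s) * (if k ∈ s then _ else 0) = 0
    rw [if_neg hk, mul_zero]
  rw [← Finset.sum_filter_of_ne (p := fun t => k ∉ t)
    (f := fun t => star (annih k x t) * y t) ?_]
  swap
  · intro t _ hne
    by_contra hk
    apply hne
    show star (if k ∈ t then 0 else _) * y t = 0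
    rw [if_pos hk, star_zero, zero_mul]
  refine Finset.sum_nbij' (fun s => s.erase k) (fun t => insert k t) ?_ ?_ ?_ ?_ ?_
  · intro s hs
    rw [Finset.mem_filter] at hs ⊢
    exact ⟨Finset.mem_univ _, Finset.notMem_erase k s⟩
  · intro t ht
    rw [Finset.mem_filter] at ht ⊢
    exact ⟨Finset.mem_univ _, Finset.mem_insert_self k t⟩
  · intro s hs
    rw [Finset.mem_filter] at hs
    exact Finset.insert_erase hs.2
  · intro t ht
    rw [Finset.mem_filter] at ht
    exact Finset.erase_insert ht.2
  · intro s hs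
    rw [Finset.mem_filter] at hs
    have hk : k ∈ s := hs.2
    have h1 : create k y s
        = (-1:ℂ)^(((s.erase k).filter (fun m => m < k)).card) * y (s.erase k) := if_pos hk
    have h2 : annih k x (s.erase k)
        = (-1:ℂ)^(((s.erase k).filter (fun m => m < k)).card) * x (insert k (s.erase k)) :=
      if_neg (Finset.notMem_erase k s)
    rw [h1, h2, Finset.insert_erase hk]
    rw [star_mul', star_pow, star_neg, star_one]
    ring

lemma create_annih_self (j : Fin d) (x : Finset (Fin d) → ℂ) (s : Finset (Fin d)) :
    create j (annih j x) s = if j ∈ s then x s else 0 := by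
  by_cases hj : j ∈ s
  · rw [if_pos hj]
    have h1 : create j (annih j x) s
        = (-1:ℂ)^(((s.erase j).filter (fun m => m < j)).card) * annih j x (s.erase j) :=
      if_pos hj
    have h2 : annih j x (s.erase j)
        = (-1:ℂ)^(((s.erase j).filter (fun m => m < j)).card) * x (insert j (s.erase j)) :=
      if_neg (Finset.notMem_erase j s)
    rw [h1, h2, Finset.insert_erase hj, ← mul_assoc, ← pow_add,
      Even.neg_one_pow ⟨_, rfl⟩, one_mul]
  · rw [if_neg hj]
    exact if_neg hj

def IsGraded (m : ℕ) (x : Finset (Fin d) → ℂ) : Prop := ∀ s, s.card ≠ m → x s = 0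

lemma isGraded_fockAct {m : ℕ} {x : Finset (Fin d) → ℂ} (hx : IsGraded m x)
    (u : Matrix (Fin d) (Fin d) ℂ) : IsGraded m (FockAct u x) := by
  intro s hs
  apply Finset.sum_eq_zero
  intro t _
  by_cases h : t.card = s.card
  · rw [dif_pos h, hx t (by rw [h]; exact hs), mul_zero]
  · rw [dif_neg h]

lemma isGraded_annih {m : ℕ} {x : Finset (Fin d) → ℂ} (hx : IsGraded (m+1) x) (l : Fin d) :
    IsGraded m (annih l x) := by
  intro t ht
  by_cases hl : l ∈ t
  · exact if_pos hl
  · have : annih l x t = (-1:ℂ)^((t.filter (fun m => m < l)).card) * x (insert l t) :=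
      if_neg hl
    rw [this, hx (insert l t) (by rw [Finset.card_insert_of_notMem hl]; omega), mul_zero]

lemma finner_expand {ι : Type*} [Fintype ι] (α β : ι → ℂ) (F G : ι → Finset (Fin d) → ℂ) :
    finner (fun t => ∑ a, α a * F a t) (fun t => ∑ b, β b * G b t)
      = ∑ a, ∑ b, star (α a) * β b * finner (F a) (G b) := by
  unfold finner
  simp only [star_sum, star_mul', Finset.sum_mul_sum]
  rw [Finset.sum_comm]
  refine Finset.sum_congr rfl fun a _ => ?_
  rw [Finset.sum_comm]
  refine Finset.sum_congr rfl fun b _ => ?_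
  rw [Finset.mul_sum]
  refine Finset.sum_congr rfl fun t _ => ?_
  ring

lemma number_identity {m : ℕ} {y : Finset (Fin d) → ℂ} (hy : IsGraded m y)
    (x : Finset (Fin d) → ℂ) :
    ∑ jj : Fin d, finner (annih jj x) (annih jj y) = (m : ℂ) * finner x y := by
  have h1 : ∀ jj : Fin d, finner (annih jj x) (annih jj y)
      = finner x (create jj (annih jj y)) := fun jj => (finner_create jj x _).symm
  rw [Finset.sum_congr rfl fun jj _ => h1 jj]
  unfold finner
  rw [Finset.sum_comm, Finset.mul_sum]
  refine Finset.sum_congr rfl fun s _ => ?_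
  have h2 : ∑ jj : Fin d, star (x s) * create jj (annih jj y) s
      = star (x s) * ((s.card : ℂ) * y s) := by
    rw [← Finset.mul_sum]
    congr 1
    rw [Finset.sum_congr rfl fun jj _ => create_annih_self jj y s,
      Finset.sum_ite_mem, Finset.univ_inter, Finset.sum_const, nsmul_eq_mul]
  rw [h2]
  by_cases hsc : s.card = m
  · rw [hsc]; ring
  · rw [hy s hsc]; ring

lemma fockAct_unitary (u : Matrix (Fin d) (Fin d) ℂ) (hu : uᴴ * u = 1) :
    ∀ (m : ℕ) (x y : Finset (Fin d) → ℂ), IsGraded m x → IsGraded m y →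
      finner (FockAct u x) (FockAct u y) = finner x y := by
  intro m
  induction m with
  | zero =>
    intro x y hx hy
    have key : ∀ z : Finset (Fin d) → ℂ, FockAct u z ∅ = z ∅ := by
      intro z
      show (∑ t : Finset (Fin d),
        if h : t.card = (∅ : Finset (Fin d)).card then (subM u ∅ t rfl h).det * z t else 0) = z ∅
      rw [Finset.sum_eq_single ∅]
      · rw [dif_pos rfl, show (subM u ∅ ∅ rfl rfl).det = 1 from Matrix.det_fin_zero, one_mul]
      · intro b _ hb
        rw [dif_neg]
        simpa [Finset.card_eq_zero] using hb
      · intro h; exact absurd (Finset.mem_univ ∅) h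
    have gz : ∀ z w : Finset (Fin d) → ℂ, IsGraded 0 z → IsGraded 0 w →
        finner z w = star (z ∅) * w ∅ := by
      intro z w hz hw
      unfold finner
      rw [Finset.sum_eq_single ∅]
      · intro b _ hb
        rw [hz b (by simpa [Finset.card_eq_zero] using hb), star_zero, zero_mul]
      · intro h; exact absurd (Finset.mem_univ ∅) h
    rw [gz _ _ (isGraded_fockAct hx u) (isGraded_fockAct hy u), key, key, ← gz x y hx hy]
  | succ m ih =>
    intro x y hx hy
    have hne : ((m+1 : ℕ) : ℂ) ≠ 0 := Nat.cast_ne_zero.mpr (Nat.succ_ne_zero m)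
    refine mul_left_cancel₀ hne ?_
    calc ((m+1:ℕ):ℂ) * finner (FockAct u x) (FockAct u y)
        = ∑ jj : Fin d, finner (annih jj (FockAct u x)) (annih jj (FockAct u y)) :=
          (number_identity (isGraded_fockAct hy u) _).symm
      _ = ∑ jj : Fin d, finner (fun t => ∑ a, u jj a * FockAct u (annih a x) t)
            (fun t => ∑ b, u jj b * FockAct u (annih b y) t) := by
          refine Finset.sum_congr rfl fun jj _ => ?_
          rw [funext (annih_fockAct u jj x), funext (annih_fockAct u jj y)]
      _ = ∑ jj : Fin d, ∑ a, ∑ b, star (u jj a) * u jj b *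
            finner (FockAct u (annih a x)) (FockAct u (annih b y)) := by
          refine Finset.sum_congr rfl fun jj _ => finner_expand _ _ _ _
      _ = ∑ jj : Fin d, ∑ a, ∑ b, star (u jj a) * u jj b *
            finner (annih a x) (annih b y) := by
          refine Finset.sum_congr rfl fun jj _ => Finset.sum_congr rfl fun a _ =>
            Finset.sum_congr rfl fun b _ => ?_
          rw [ih _ _ (isGraded_annih hx a) (isGraded_annih hy b)]
      _ = ∑ a, ∑ b, (uᴴ * u) a b * finner (annih a x) (annih b y) := by
          rw [Finset.sum_comm]
          refine Finset.sum_congr rfl fun a _ => ?_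
          rw [Finset.sum_comm]
          refine Finset.sum_congr rfl fun b _ => ?_
          rw [Matrix.mul_apply, Finset.sum_mul]
          refine Finset.sum_congr rfl fun jj _ => ?_
          rw [Matrix.conjTranspose_apply]
      _ = ∑ a, finner (annih a x) (annih a y) := by
          rw [hu]
          refine Finset.sum_congr rfl fun a _ => ?_
          simp [Matrix.one_apply]
      _ = ((m+1:ℕ):ℂ) * finner x y := number_identity hy x

lemma embed_fockAct {N : ℕ} (u : Matrix (Fin d) (Fin d) ℂ) (c : CoeffVec N d) :
    embed (compAct u c) = FockAct u (embed c) := by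
  classical
  funext s
  by_cases hs : s.card = N
  · have h1 : embed (compAct u c) s = compAct u c ⟨s, hs⟩ := dif_pos hs
    rw [h1]
    have h2 : FockAct u (embed c) s
        = ∑ t : Config N d, (subM u s t.val hs t.2).det * c t := by
      show (∑ t : Finset (Fin d),
        if h : t.card = s.card then (subM u s t rfl h).det * embed c t else 0) = _
      rw [← Finset.sum_filter_of_ne (p := fun t : Finset (Fin d) => t.card = N) ?_]
      swap
      · intro t _ hne
        by_contra htN
        apply hne
        by_cases h : t.card = s.card
        · rw [dif_pos h, show embed c t = 0 from dif_neg htN, mul_zero]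
        · rw [dif_neg h]
      rw [Finset.sum_subtype (p := fun t : Finset (Fin d) => t.card = N) _
        (fun t => by simp) (fun t : Finset (Fin d) =>
        if h : t.card = s.card then (subM u s t rfl h).det * embed c t else 0)]
      refine Finset.sum_congr rfl fun t _ => ?_
      rw [dif_pos (t.2.trans hs.symm), show embed c t.val = c ⟨t.val, t.2⟩ from dif_pos t.2,
        subM_det_congr u s t.val rfl (t.2.trans hs.symm) hs t.2, Subtype.coe_eta]
    rw [h2]
    rfl
  · have hg : IsGraded N (embed c) := fun t ht => dif_neg ht
    rw [show embed (compAct u c) s = 0 from dif_neg hs]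
    exact (isGraded_fockAct hg u s hs).symm

end Stmt9Aux
open Matrix

/-- Equivariance of the one-particle reduced density matrix: for every unitary `u` and
coefficient vector `c`, `ρ₁(u·c) = u · ρ₁(c) · uᴴ`. -/
theorem stmt_9 (N d : ℕ) (hN : 1 ≤ N) (hNd : N ≤ d)
    (u : Matrix (Fin d) (Fin d) ℂ) (hu : uᴴ * u = 1) (hu' : u * uᴴ = 1)
    (c : CoeffVec N d) :
    rho1 (compAct u c) = u * rho1 c * uᴴ := by
  classical
  open Stmt9Aux in
  ext j k
  obtain ⟨m, hm⟩ : ∃ m, N = m + 1 := ⟨N - 1, by omega⟩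
  have hgN : Stmt9Aux.IsGraded N (embed c) := fun t ht => dif_neg ht
  have hgm : ∀ a : Fin d, Stmt9Aux.IsGraded m (annih a (embed c)) := fun a =>
    Stmt9Aux.isGraded_annih (hm ▸ hgN) a
  have hE : embed (compAct u c) = Stmt9Aux.FockAct u (embed c) :=
    Stmt9Aux.embed_fockAct u c
  have hrho : ∀ a b : Fin d, rho1 c b a
      = Stmt9Aux.finner (annih a (embed c)) (annih b (embed c)) := fun a b =>
    Stmt9Aux.finner_create a (embed c) (annih b (embed c))
  calc rho1 (compAct u c) j k
      = Stmt9Aux.finner (Stmt9Aux.FockAct u (embed c))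
          (create k (annih j (Stmt9Aux.FockAct u (embed c)))) := by
        show Stmt9Aux.finner (embed (compAct u c))
          (create k (annih j (embed (compAct u c)))) = _
        rw [hE]
    _ = Stmt9Aux.finner (annih k (Stmt9Aux.FockAct u (embed c)))
          (annih j (Stmt9Aux.FockAct u (embed c))) :=
        Stmt9Aux.finner_create k _ _
    _ = Stmt9Aux.finner
          (fun t => ∑ a, u k a * Stmt9Aux.FockAct u (annih a (embed c)) t)
          (fun t => ∑ b, u j b * Stmt9Aux.FockAct u (annih b (embed c)) t) := by
        rw [funext (Stmt9Aux.annih_fockAct u k (embed c)),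
          funext (Stmt9Aux.annih_fockAct u j (embed c))]
    _ = ∑ a : Fin d, ∑ b : Fin d, star (u k a) * u j b *
          Stmt9Aux.finner (Stmt9Aux.FockAct u (annih a (embed c)))
            (Stmt9Aux.FockAct u (annih b (embed c))) :=
        Stmt9Aux.finner_expand _ _ _ _
    _ = ∑ a : Fin d, ∑ b : Fin d, star (u k a) * u j b *
          Stmt9Aux.finner (annih a (embed c)) (annih b (embed c)) := by
        refine Finset.sum_congr rfl fun a _ => Finset.sum_congr rfl fun b _ => ?_
        rw [Stmt9Aux.fockAct_unitary u hu m _ _ (hgm a) (hgm b)]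
    _ = (u * rho1 c * uᴴ) j k := by
        rw [Matrix.mul_apply]
        refine Finset.sum_congr rfl fun a _ => ?_
        rw [Matrix.mul_apply, Finset.sum_mul]
        refine Finset.sum_congr rfl fun b _ => ?_
        rw [Matrix.conjTranspose_apply, ← hrho a b]
        ring
end
end

section
/- Let c be an N-fermion coefficient vector, h a Hermitian d×d complex matrix and λ ∈ ℝ such that ĥ c = λ c. Then h · ρ₁(c) = ρ₁(c) · h; i.e., every infinitesimal local symmetry of the state is a symmetry of its one-particle reduced density matrix. -/
open scoped BigOperators

noncomputable section

namespace S10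

abbrev F (d : ℕ) := Finset (Fin d) → ℂ
variable {d : ℕ}
def cnt (t : Finset (Fin d)) (j : Fin d) : ℕ := (t.filter (fun m => m < j)).card
lemma create_apply (j : Fin d) (x : F d) (s : Finset (Fin d)) :
    create j x s = if j ∈ s then (-1 : ℂ) ^ cnt s j * x (s.erase j) else 0 := by
  unfold create cnt
  rw [Finset.filter_erase, Finset.erase_eq_of_notMem (by simp)]
lemma annih_apply (k : Fin d) (x : F d) (t : Finset (Fin d)) :
    annih k x t = if k ∈ t then 0 else (-1 : ℂ) ^ cnt t k * x (insert k t) := rfl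
lemma cnt_insert {a : Fin d} {t : Finset (Fin d)} (ha : a ∉ t) (j : Fin d) :
    cnt (insert a t) j = cnt t j + (if a < j then 1 else 0) := by
  unfold cnt
  rw [Finset.filter_insert]
  split
  · rw [Finset.card_insert_of_notMem (fun hm => ha (Finset.mem_of_mem_filter _ hm))]
  · simp
lemma cnt_erase {a : Fin d} {t : Finset (Fin d)} (ha : a ∈ t) (j : Fin d) :
    cnt t j = cnt (t.erase a) j + (if a < j then 1 else 0) := by
  conv_lhs => rw [← Finset.insert_erase ha]
  exact cnt_insert (Finset.notMem_erase a t) j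
lemma neg_one_pow_sq (n : ℕ) : (-1 : ℂ) ^ n * (-1 : ℂ) ^ n = 1 := by
  rw [← pow_add, ← two_mul, pow_mul]; norm_num

lemma car (j a : Fin d) (x : F d) :
    annih j (create a x) = (if j = a then x else 0) - create a (annih j x) := by
  funext t
  by_cases hja : j = a
  · subst hja
    simp only [Pi.sub_apply, if_pos rfl]
    by_cases hjt : j ∈ t
    · have h1 : j ∉ t.erase j := Finset.notMem_erase j t
      rw [annih_apply, if_pos hjt, create_apply, if_pos hjt, annih_apply, if_neg h1,
        Finset.insert_erase hjt]
      have hc : cnt t j = cnt (t.erase j) j := by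
        rw [cnt_erase hjt j]; simp
      rw [← hc, ← mul_assoc, neg_one_pow_sq]
      simp
    · rw [annih_apply, if_neg hjt, create_apply,
        if_pos (Finset.mem_insert_self j t), Finset.erase_insert hjt,
        create_apply, if_neg hjt]
      have hc : cnt (insert j t) j = cnt t j := by rw [cnt_insert hjt j]; simp
      rw [hc, ← mul_assoc, neg_one_pow_sq]
      simp
  · simp only [Pi.sub_apply, if_neg hja, Pi.zero_apply]
    by_cases hjt : j ∈ t
    · rw [annih_apply, if_pos hjt, create_apply]
      split
      · next hat =>
        rw [annih_apply, if_pos (Finset.mem_erase.mpr ⟨hja, hjt⟩)]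
        simp
      · simp
    · by_cases hat : a ∈ t
      · have h1 : a ∈ insert j t := Finset.mem_insert_of_mem hat
        have h2 : j ∉ t.erase a := fun hm => hjt (Finset.mem_of_mem_erase hm)
        rw [annih_apply, if_neg hjt, create_apply, if_pos h1, create_apply, if_pos hat,
          annih_apply, if_neg h2, Finset.erase_insert_of_ne hja]
        rw [cnt_insert hjt a, cnt_erase hat j]
        rcases lt_or_gt_of_ne hja with hlt | hgt
        · rw [if_pos hlt, if_neg (not_lt.mpr hlt.le), pow_add, pow_add]
          ring
        · rw [if_neg (not_lt.mpr hgt.le), if_pos hgt, pow_add, pow_add]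
          ring
      · have h1 : a ∉ insert j t := by
          simp only [Finset.mem_insert, hat, or_false]
          exact fun e => hja e.symm
        rw [annih_apply, if_neg hjt, create_apply, if_neg h1, create_apply, if_neg hat]
        ring

lemma ccomm (k a : Fin d) (x : F d) :
    create k (create a x) = - create a (create k x) := by
  funext s
  simp only [Pi.neg_apply]
  by_cases hka : k = a
  · subst hka
    rw [create_apply, create_apply]
    split
    · rw [if_neg (Finset.notMem_erase k s)]
      ring
    · ring
  · by_cases hks : k ∈ s <;> by_cases has : a ∈ s
    · have h1 : a ∈ s.erase k := Finset.mem_erase.mpr ⟨fun e => hka e.symm, has⟩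
      have h2 : k ∈ s.erase a := Finset.mem_erase.mpr ⟨hka, hks⟩
      rw [create_apply, if_pos hks, create_apply, if_pos h1, create_apply, if_pos has,
        create_apply, if_pos h2, Finset.erase_right_comm]
      rw [cnt_erase has k, cnt_erase hks a]
      rcases lt_or_gt_of_ne hka with hlt | hgt
      · rw [if_pos hlt, if_neg (not_lt.mpr hlt.le), pow_add, pow_add]; ring
      · rw [if_neg (not_lt.mpr hgt.le), if_pos hgt, pow_add, pow_add]; ring
    · have h1 : a ∉ s.erase k := fun hm => has (Finset.mem_of_mem_erase hm)
      rw [create_apply, if_pos hks, create_apply, if_neg h1, create_apply, if_neg has]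
      ring
    · have h2 : k ∉ s.erase a := fun hm => hks (Finset.mem_of_mem_erase hm)
      rw [create_apply, if_neg hks, create_apply, if_pos has, create_apply, if_neg h2]
      ring
    · rw [create_apply, if_neg hks, create_apply, if_neg has]
      ring

lemma acomm (j b : Fin d) (x : F d) :
    annih j (annih b x) = - annih b (annih j x) := by
  funext t
  simp only [Pi.neg_apply]
  by_cases hjb : j = b
  · subst hjb
    rw [annih_apply, annih_apply]
    split
    · ring
    · rw [if_pos (Finset.mem_insert_self j t)]
      ring
  · by_cases hjt : j ∈ t <;> by_cases hbt : b ∈ t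
    · rw [annih_apply, if_pos hjt, annih_apply, if_pos hbt]; ring
    · rw [annih_apply, if_pos hjt, annih_apply, if_neg hbt, annih_apply,
        if_pos (Finset.mem_insert_of_mem hjt)]
      ring
    · rw [annih_apply, if_neg hjt, annih_apply, if_pos (Finset.mem_insert_of_mem hbt),
        annih_apply, if_pos hbt]
      ring
    · have h1 : b ∉ insert j t := by
        simp only [Finset.mem_insert, hbt, or_false]
        exact fun e => hjb e.symm
      have h2 : j ∉ insert b t := by
        simp only [Finset.mem_insert, hjt, or_false]
        exact hjb
      rw [annih_apply, if_neg hjt, annih_apply, if_neg h1, annih_apply, if_neg hbt,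
        annih_apply, if_neg h2, Finset.insert_comm]
      rw [cnt_insert hjt b, cnt_insert hbt j]
      rcases lt_or_gt_of_ne hjb with hlt | hgt
      · rw [if_pos hlt, if_neg (not_lt.mpr hlt.le), pow_add, pow_add]; ring
      · rw [if_neg (not_lt.mpr hgt.le), if_pos hgt, pow_add, pow_add]; ring

lemma create_zero (j : Fin d) : create j (0 : F d) = 0 := by
  funext s; simp [create_apply]

lemma annih_zero (j : Fin d) : annih j (0 : F d) = 0 := by
  funext t; simp only [annih_apply, Pi.zero_apply, mul_zero, ite_self]

lemma create_sub (j : Fin d) (x y : F d) :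
    create j (x - y) = create j x - create j y := by
  funext s
  simp only [create_apply, Pi.sub_apply]
  split <;> ring

lemma annih_sub (j : Fin d) (x y : F d) :
    annih j (x - y) = annih j x - annih j y := by
  funext t
  simp only [annih_apply, Pi.sub_apply]
  split <;> ring

lemma create_neg (j : Fin d) (x : F d) : create j (-x) = - create j x := by
  funext s
  simp only [create_apply, Pi.neg_apply]
  split <;> ring

lemma annih_neg (j : Fin d) (x : F d) : annih j (-x) = - annih j x := by
  funext t
  simp only [annih_apply, Pi.neg_apply]
  split <;> ring

lemma create_smul (j : Fin d) (a : ℂ) (x : F d) :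
    create j (a • x) = a • create j x := by
  funext s
  simp only [create_apply, Pi.smul_apply, smul_eq_mul]
  split <;> ring

lemma annih_smul (j : Fin d) (a : ℂ) (x : F d) :
    annih j (a • x) = a • annih j x := by
  funext t
  simp only [annih_apply, Pi.smul_apply, smul_eq_mul]
  split <;> ring

lemma create_sum {ι : Type*} (j : Fin d) (u : Finset ι) (f : ι → F d) :
    create j (∑ i ∈ u, f i) = ∑ i ∈ u, create j (f i) := by
  funext s
  simp only [create_apply, Finset.sum_apply]
  split
  · rw [Finset.mul_sum]
  · simp

lemma annih_sum {ι : Type*} (j : Fin d) (u : Finset ι) (f : ι → F d) :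
    annih j (∑ i ∈ u, f i) = ∑ i ∈ u, annih j (f i) := by
  funext t
  simp only [annih_apply, Finset.sum_apply]
  split
  · simp
  · rw [Finset.mul_sum]

lemma create_ite (j : Fin d) (P : Prop) [Decidable P] (x : F d) :
    create j (if P then x else 0) = if P then create j x else 0 := by
  split <;> simp [create_zero]

lemma car' (b k : Fin d) (v : F d) :
    create k (annih b v) = (if b = k then v else 0) - annih b (create k v) := by
  rw [car b k v]
  abel

lemma comm4 (j k a b : Fin d) (x : F d) :
    create k (annih j (create a (annih b x)))
      = (if j = a then create k (annih b x) else 0)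
        - (if b = k then create a (annih j x) else 0)
        + create a (annih b (create k (annih j x))) := by
  rw [car j a (annih b x), create_sub, create_ite]
  rw [acomm j b x, create_neg, create_neg]
  rw [ccomm k a (annih b (annih j x))]
  rw [car' b k (annih j x), create_sub, create_ite]
  abel

def ip (x y : F d) : ℂ := ∑ s, star (x s) * y s

lemma ip_star (x y : F d) : star (ip x y) = ip y x := by
  unfold ip
  rw [star_sum]
  refine Finset.sum_congr rfl fun s _ => ?_
  rw [star_mul, star_star]

lemma ip_smul_right (a : ℂ) (x y : F d) : ip x (a • y) = a * ip x y := by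
  unfold ip
  rw [Finset.mul_sum]
  refine Finset.sum_congr rfl fun s _ => ?_
  simp only [Pi.smul_apply, smul_eq_mul]
  ring

lemma ip_sum_right {ι : Type*} (x : F d) (u : Finset ι) (f : ι → F d) :
    ip x (∑ i ∈ u, f i) = ∑ i ∈ u, ip x (f i) := by
  unfold ip
  simp only [Finset.sum_apply, Finset.mul_sum]
  rw [Finset.sum_comm]

lemma ip_sub_right (x y z : F d) : ip x (y - z) = ip x y - ip x z := by
  unfold ip
  rw [← Finset.sum_sub_distrib]
  refine Finset.sum_congr rfl fun s _ => ?_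
  simp only [Pi.sub_apply]
  ring

lemma ip_add_right (x y z : F d) : ip x (y + z) = ip x y + ip x z := by
  unfold ip
  rw [← Finset.sum_add_distrib]
  refine Finset.sum_congr rfl fun s _ => ?_
  simp only [Pi.add_apply]
  ring

lemma ip_zero_right (x : F d) : ip x (0 : F d) = 0 := by
  simp [ip]

def xorj (j : Fin d) (s : Finset (Fin d)) : Finset (Fin d) :=
  if j ∈ s then s.erase j else insert j s

lemma xorj_invol (j : Fin d) : Function.Involutive (xorj j) := by
  intro s
  unfold xorj
  by_cases hjs : j ∈ s
  · rw [if_pos hjs, if_neg (Finset.notMem_erase j s), Finset.insert_erase hjs]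
  · rw [if_neg hjs, if_pos (Finset.mem_insert_self j s), Finset.erase_insert hjs]

lemma adj_create (j : Fin d) (x y : F d) :
    ip x (create j y) = ip (annih j x) y := by
  unfold ip
  rw [← Equiv.sum_comp ((xorj_invol (d := d) j).toPerm)]
  simp only [Function.Involutive.coe_toPerm]
  refine Finset.sum_congr rfl fun s _ => ?_
  by_cases hjs : j ∈ s
  · rw [annih_apply, if_pos hjs]
    unfold xorj
    rw [if_pos hjs, create_apply, if_neg (Finset.notMem_erase j s)]
    simp
  · rw [annih_apply, if_neg hjs]
    unfold xorj
    rw [if_neg hjs, create_apply, if_pos (Finset.mem_insert_self j s),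
      Finset.erase_insert hjs]
    have hc : cnt (insert j s) j = cnt s j := by rw [cnt_insert hjs j]; simp
    rw [hc]
    rw [star_mul]
    have : star ((-1 : ℂ) ^ cnt s j) = (-1 : ℂ) ^ cnt s j := by
      rw [star_pow]; norm_num
    rw [this]
    ring

lemma adj_annih (j : Fin d) (x y : F d) :
    ip x (annih j y) = ip (create j x) y := by
  have h1 : ip y (create j x) = ip (annih j y) x := adj_create j y x
  calc ip x (annih j y) = star (ip (annih j y) x) := (ip_star _ _).symm
    _ = star (ip y (create j x)) := by rw [h1]
    _ = ip (create j x) y := ip_star _ _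

lemma ip_ite (x : F d) (P : Prop) [Decidable P] (y : F d) :
    ip x (if P then y else 0) = if P then ip x y else 0 := by
  split <;> simp [ip_zero_right]



lemma oneBody_expand (h : Matrix (Fin d) (Fin d) ℂ) (x : F d) :
    oneBody h x = ∑ a : Fin d, ∑ b : Fin d, h a b • create a (annih b x) := by
  funext s
  simp [oneBody, Finset.sum_apply, Pi.smul_apply, smul_eq_mul]

lemma ip_oneBody (h : Matrix (Fin d) (Fin d) ℂ) (w z : F d) :
    ip w (oneBody h z) = ∑ a : Fin d, ∑ b : Fin d, h a b * ip w (create a (annih b z)) := by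
  rw [oneBody_expand]
  simp only [ip_sum_right, ip_smul_right]

lemma num_conserve {N : ℕ} (c : {s : Finset (Fin d) // s.card = N} → ℂ) (a b : Fin d)
    (s : Finset (Fin d)) (hs : s.card ≠ N) :
    create a (annih b (embed c)) s = 0 := by
  rw [create_apply]
  split
  · next hat =>
    rw [annih_apply]
    split
    · simp
    · next hbs =>
      have hcard : (insert b (s.erase a)).card = s.card := by
        rw [Finset.card_insert_of_notMem hbs, Finset.card_erase_of_mem hat]
        have := Finset.card_pos.mpr ⟨a, hat⟩
        omega
      have : embed c (insert b (s.erase a)) = 0 := by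
        unfold embed
        rw [dif_neg (by rw [hcard]; exact hs)]
      rw [this]
      ring
  · rfl

lemma oneBody_conserve {N : ℕ} (h : Matrix (Fin d) (Fin d) ℂ)
    (c : {s : Finset (Fin d) // s.card = N} → ℂ)
    (s : Finset (Fin d)) (hs : s.card ≠ N) :
    oneBody h (embed c) s = 0 := by
  unfold oneBody
  refine Finset.sum_eq_zero fun a _ => Finset.sum_eq_zero fun b _ => ?_
  rw [num_conserve c a b s hs]
  ring


end S10

/-- Every infinitesimal local symmetry of the state is a symmetry of its one-particle
reduced density matrix: if `h` is Hermitian and `ĥ c = λ c` for a real `λ`, then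
`h · ρ₁(c) = ρ₁(c) · h`. -/
theorem stmt_10 (N d : ℕ) (hN : 1 ≤ N) (hNd : N ≤ d)
    (c : CoeffVec N d) (h : Matrix (Fin d) (Fin d) ℂ) (hH : h.IsHermitian)
    (lam : ℝ) (heig : oneBodyC h c = (lam : ℂ) • c) :
    h * rho1 c = rho1 c * h := by
  have hr : ∀ p q : Fin d, rho1 c p q
      = S10.ip (embed c) (create q (annih p (embed c))) := fun p q => rfl
  have hstar : star ((lam : ℂ)) = (lam : ℂ) := by
    simp [Complex.star_def, Complex.conj_ofReal]
  have hev : oneBody h (embed c) = (lam : ℂ) • embed c := by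
    funext s
    by_cases hs : s.card = N
    · have h1 := congrFun heig ⟨s, hs⟩
      have h2 : embed c s = c ⟨s, hs⟩ := by unfold embed; rw [dif_pos hs]
      simp only [oneBodyC, Pi.smul_apply, smul_eq_mul] at h1 ⊢
      rw [h1, h2]
    · rw [S10.oneBody_conserve h c s hs]
      simp [embed, hs]
  ext j k
  have eI : S10.ip (embed c) (create k (annih j (oneBody h (embed c))))
      = (lam : ℂ) * S10.ip (embed c) (create k (annih j (embed c))) := by
    rw [hev, S10.annih_smul, S10.create_smul, S10.ip_smul_right]
  have eII : ∀ z, S10.ip (embed c) (oneBody h z) = (lam : ℂ) * S10.ip (embed c) z := by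
    intro z
    rw [S10.ip_oneBody]
    have step : ∀ a b : Fin d, h a b * S10.ip (embed c) (create a (annih b z))
        = star (h b a * S10.ip z (create b (annih a (embed c)))) := by
      intro a b
      rw [S10.adj_create, S10.adj_annih, star_mul', hH.apply a b, S10.ip_star]
    calc ∑ a : Fin d, ∑ b : Fin d, h a b * S10.ip (embed c) (create a (annih b z))
        = ∑ a : Fin d, ∑ b : Fin d,
            star (h b a * S10.ip z (create b (annih a (embed c)))) :=
          Finset.sum_congr rfl fun a _ => Finset.sum_congr rfl fun b _ => step a b
      _ = star (∑ a : Fin d, ∑ b : Fin d,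
            h b a * S10.ip z (create b (annih a (embed c)))) := by
          rw [star_sum]
          exact Finset.sum_congr rfl fun a _ => (star_sum _ _).symm
      _ = star (S10.ip z (oneBody h (embed c))) := by
          rw [S10.ip_oneBody]
          congr 1
          exact Finset.sum_comm
      _ = (lam : ℂ) * S10.ip (embed c) z := by
          rw [hev, S10.ip_smul_right, star_mul', hstar, S10.ip_star]
  have eIII : S10.ip (embed c) (create k (annih j (oneBody h (embed c))))
      = (∑ b : Fin d, h j b * S10.ip (embed c) (create k (annih b (embed c))))
        - (∑ a : Fin d, h a k * S10.ip (embed c) (create a (annih j (embed c))))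
        + S10.ip (embed c) (oneBody h (create k (annih j (embed c)))) := by
    conv_lhs => rw [S10.oneBody_expand]
    simp only [S10.annih_sum, S10.annih_smul, S10.create_sum, S10.create_smul,
      S10.ip_sum_right, S10.ip_smul_right]
    have e4 : ∀ a b : Fin d,
        S10.ip (embed c) (create k (annih j (create a (annih b (embed c)))))
        = (if j = a then S10.ip (embed c) (create k (annih b (embed c))) else 0)
          - (if b = k then S10.ip (embed c) (create a (annih j (embed c))) else 0)
          + S10.ip (embed c) (create a (annih b (create k (annih j (embed c))))) := by
      intro a b
      rw [S10.comm4, S10.ip_add_right, S10.ip_sub_right, S10.ip_ite, S10.ip_ite]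
    simp only [e4]
    conv_rhs => rw [S10.ip_oneBody]
    simp only [mul_add, mul_sub, Finset.sum_add_distrib, Finset.sum_sub_distrib]
    congr 1
    congr 1
    · simp only [mul_ite, mul_zero]
      rw [Finset.sum_comm]
      simp [Finset.sum_ite_eq]
    · simp only [mul_ite, mul_zero]
      simp [Finset.sum_ite_eq']
  have eII' := eII (create k (annih j (embed c)))
  simp only [Matrix.mul_apply, hr]
  have hcomm : (∑ a : Fin d, S10.ip (embed c) (create a (annih j (embed c))) * h a k)
      = ∑ a : Fin d, h a k * S10.ip (embed c) (create a (annih j (embed c))) :=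
    Finset.sum_congr rfl fun a _ => mul_comm _ _
  rw [hcomm]
  linear_combination eI - eIII - eII'
end
end

section
/- Let 𝔰 be a real Lie subalgebra of the d×d complex matrices (with bracket [X,Y] = XY − YX) all of whose elements are skew-Hermitian, and let 𝔱 ⊆ 𝔰 be a maximal abelian Lie subalgebra of 𝔰 (an abelian Lie subalgebra of 𝔰 not properly contained in any abelian Lie subalgebra of 𝔰) all of whose elements are diagonal matrices. Then for every X ∈ 𝔰, the diagonal matrix whose j-th diagonal entry is X_{jj} also belongs to 𝔰. -/
/-!
Let `U` be the real span of the brackets `⁅T, v⁆` with `T ∈ t`, `v ∈ s`: it lies in `s`, and it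
has zero diagonal because each `T` is diagonal. Split `X = u + y` with `u ∈ U` and `y` orthogonal
to `U` for the positive definite form `⟪A, B⟫ = Re tr (Aᴴ B)`. For skew-Hermitian `T`, `ad T` is
skew for this form, so `⟪⁅T, y⁆, ⁅T, y⁆⟫ = -⟪⁅T, ⁅T, y⁆⁆, y⟫ = 0` as `⁅T, ⁅T, y⁆⁆ ∈ U`. Thus `y`
centralizes `t`, maximality puts `y` in `t`, and the diagonal matrix `y` is the diagonal part
of `X`.
-/

open Matrix

attribute [local instance 100] LieRing.ofAssociativeRing

theorem LinearMap.BilinForm.isCompl_orthogonal_of_self_eq_zero {K V : Type*} [Field K]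
    [AddCommGroup V] [Module K V] [FiniteDimensional K V] {B : LinearMap.BilinForm K V}
    (hB : B.IsRefl) (hself : ∀ x, B x x = 0 → x = 0) (W : Submodule K V) :
    IsCompl W (B.orthogonal W) :=
  (isCompl_orthogonal_iff_disjoint hB).2 <|
    Submodule.disjoint_def.2 fun x hxW hxW' => hself x (hxW' x hxW)

theorem LieSubalgebra.mem_of_forall_lie_eq_zero_of_maximal {R L : Type*} [CommRing R]
    [LieRing L] [LieAlgebra R L] {s t : LieSubalgebra R L} (hts : t ≤ s)
    (habelian : ∀ X ∈ t, ∀ Y ∈ t, ⁅X, Y⁆ = 0)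
    (hmax : ∀ t' : LieSubalgebra R L,
      t' ≤ s → (∀ X ∈ t', ∀ Y ∈ t', ⁅X, Y⁆ = 0) → t ≤ t' → t' = t)
    {y : L} (hys : y ∈ s) (hyt : ∀ T ∈ t, ⁅T, y⁆ = 0) : y ∈ t := by
  have hcomm : ∀ a ∈ insert y (t : Set L), ∀ b ∈ insert y (t : Set L), ⁅a, b⁆ = 0 := by
    rintro a (rfl | ha) b (rfl | hb)
    · exact lie_self _
    · rw [← lie_skew, hyt b hb, neg_zero]
    · exact hyt a ha
    · exact habelian a ha b hb
  have habelian' : ∀ X ∈ lieSpan R L (insert y t), ∀ Y ∈ lieSpan R L (insert y t), ⁅X, Y⁆ = 0 :=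
    fun X hX Y hY => congrArg Subtype.val
      ((isLieAbelian_lieSpan_iff.2 hcomm).trivial ⟨X, hX⟩ ⟨Y, hY⟩)
  have hspan : lieSpan R L (insert y t) = t :=
    hmax _ (lieSpan_le.2 (Set.insert_subset hys hts)) habelian'
      (fun _ hx => subset_lieSpan (Set.mem_insert_of_mem y hx))
  exact hspan ▸ subset_lieSpan (Set.mem_insert y _)

namespace Matrix

theorem IsDiag.diag_lie_eq_zero {n α : Type*} [Fintype n] [CommRing α]
    {T : Matrix n n α} (hT : T.IsDiag) (A : Matrix n n α) : diag ⁅T, A⁆ = 0 := by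
  classical
  rw [← hT.diagonal_diag]
  ext j
  simp [Ring.lie_def, diagonal_mul, mul_diagonal, mul_comm]

variable {m n : Type*} [Fintype m] [Fintype n]

noncomputable def frobeniusForm : LinearMap.BilinForm ℝ (Matrix m n ℂ) :=
  LinearMap.mk₂ ℝ (fun X Y => (Xᴴ * Y).trace.re)
    (fun X X' Y => by simp [conjTranspose_add, Matrix.add_mul])
    (fun r X Y => by simp [conjTranspose_smul, Complex.real_smul])
    (fun X Y Y' => by simp [Matrix.mul_add])
    (fun r X Y => by simp [Complex.real_smul])

theorem frobeniusForm_apply (X Y : Matrix m n ℂ) : frobeniusForm X Y = (Xᴴ * Y).trace.re :=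
  rfl

theorem frobeniusForm_isSymm : (frobeniusForm : LinearMap.BilinForm ℝ (Matrix m n ℂ)).IsSymm := by
  refine ⟨fun X Y => ?_⟩
  rw [frobeniusForm_apply, frobeniusForm_apply,
    ← conjTranspose_conjTranspose X, ← conjTranspose_mul, trace_conjTranspose,
    conjTranspose_conjTranspose, Complex.star_def, Complex.conj_re]

open scoped ComplexOrder in
theorem eq_zero_of_frobeniusForm_self {X : Matrix m n ℂ} (h : frobeniusForm X X = 0) : X = 0 := by
  have hnonneg := Complex.nonneg_iff.1 (posSemidef_conjTranspose_mul_self X).trace_nonneg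
  rw [← trace_conjTranspose_mul_self_eq_zero_iff]
  exact Complex.ext h hnonneg.2.symm

theorem frobeniusForm_lie_left {T : Matrix n n ℂ} (hT : Tᴴ = -T) (A C : Matrix n n ℂ) :
    frobeniusForm ⁅T, A⁆ C = -frobeniusForm A ⁅T, C⁆ := by
  have h : (⁅T, A⁆ᴴ * C).trace = -(Aᴴ * ⁅T, C⁆).trace := by
    simp only [Ring.lie_def, conjTranspose_sub, conjTranspose_mul, hT, Matrix.sub_mul,
      Matrix.mul_sub, Matrix.mul_neg, Matrix.neg_mul, trace_sub, trace_neg, Matrix.mul_assoc]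
    rw [trace_mul_comm T, Matrix.mul_assoc]
    ring
  rw [frobeniusForm_apply, frobeniusForm_apply, h, Complex.neg_re]

theorem lie_eq_zero_of_frobeniusForm_lie_lie {T y : Matrix n n ℂ} (hT : Tᴴ = -T)
    (h : frobeniusForm ⁅T, ⁅T, y⁆⁆ y = 0) : ⁅T, y⁆ = 0 :=
  eq_zero_of_frobeniusForm_self <| by rw [← neg_eq_zero, ← frobeniusForm_lie_left hT, h]

end Matrix

/-- Let `𝔰` be a real Lie subalgebra of the `d×d` complex matrices all of whose elements are
skew-Hermitian, and let `𝔱 ⊆ 𝔰` be a maximal abelian Lie subalgebra of `𝔰` all of whose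
elements are diagonal matrices. Then for every `X ∈ 𝔰`, the diagonal matrix whose `j`-th
diagonal entry is `X j j` also belongs to `𝔰`. -/
theorem stmt_11 (d : ℕ) (s t : LieSubalgebra ℝ (Matrix (Fin d) (Fin d) ℂ))
    (hskew : ∀ X ∈ s, Xᴴ = -X)
    (hts : t ≤ s)
    (habelian : ∀ X ∈ t, ∀ Y ∈ t, ⁅X, Y⁆ = 0)
    (hmax : ∀ t' : LieSubalgebra ℝ (Matrix (Fin d) (Fin d) ℂ),
      t' ≤ s → (∀ X ∈ t', ∀ Y ∈ t', ⁅X, Y⁆ = 0) → t ≤ t' → t' = t)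
    (hdiag : ∀ X ∈ t, ∀ j k : Fin d, j ≠ k → X j k = 0) :
    ∀ X ∈ s, (Matrix.diagonal fun j => X j j) ∈ s := by
  intro X hX
  set U : Submodule ℝ (Matrix (Fin d) (Fin d) ℂ) :=
    Submodule.span ℝ (Set.image2 (fun T v => ⁅T, v⁆) (t : Set (Matrix (Fin d) (Fin d) ℂ)) s)
  have hUs : U ≤ s.toSubmodule := Submodule.span_le.2 <| by
    rintro _ ⟨T, hT, v, hv, rfl⟩
    exact s.lie_mem (hts hT) hv
  have hUdiag : U ≤ LinearMap.ker (diagLinearMap (Fin d) ℝ ℂ) := Submodule.span_le.2 <| by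
    rintro _ ⟨T, hT, v, _, rfl⟩
    exact IsDiag.diag_lie_eq_zero (hdiag T hT) v
  obtain ⟨u, hu, y, hy, rfl⟩ := Submodule.mem_sup.1 <|
    (LinearMap.BilinForm.isCompl_orthogonal_of_self_eq_zero frobeniusForm_isSymm.isRefl
      (fun _ => eq_zero_of_frobeniusForm_self) U).sup_eq_top ▸ Submodule.mem_top (x := X)
  have hys : y ∈ s := by simpa using s.sub_mem hX (hUs hu)
  have hyt : y ∈ t := LieSubalgebra.mem_of_forall_lie_eq_zero_of_maximal hts habelian hmax hys
    fun T hT => lie_eq_zero_of_frobeniusForm_lie_lie (hskew T (hts hT)) <|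
      hy _ (Submodule.subset_span ⟨T, hT, _, s.lie_mem (hts hT) hys, rfl⟩)
  have hu0 : diag u = 0 := hUdiag hu
  change diagonal (diag (u + y)) ∈ s
  rwa [diag_add, hu0, zero_add, IsDiag.diagonal_diag (hdiag y hyt)]
end
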